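/- arXiv:2211.13134 — 7 statements merged into one kernel-verified Lean document; each statement's English description precedes it below -/
import Mathlib

section
/- Let (F_n)_{n∈ℕ} be a sequence in [-∞, ∞) (ℕ = {1,2,3,...}), and suppose there exist sequences (σ_n)_{n∈ℕ} and (R_n)_{n∈ℕ} of nonnegative integers with σ_n/n → 0 and R_n/n → 0 as n → ∞, such that F_{n+σ_n+m} ≤ F_n + R_n + F_m for all n, m ∈ ℕ. Then lim_{n→∞} F_n/n exists in [-∞, ∞) and equals F := inf_{n∈ℕ} (F_n + R_n)/(n + σ_n), understood in [-∞, ∞). -/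
/-!
Fix `n ≥ 1` and put `p = n + σ n`. The hypothesis says that shifting the argument by `p` costs
at most `F n + R n`, so `F N ≤ N (F n + R n) / p + O(1)` and hence
`limsup F N / N ≤ (F n + R n) / (n + σ n)`. Conversely, if `b` is below the infimum then
`F N ≥ b (N + σ N) - R N` for every `N`, and since `σ N / N → 0`, `R N / N → 0` this gives
`liminf F N / N ≥ b`.
-/

open Filter Topology

namespace EReal

lemma coe_mul_sub_lt_of_lt_add_div {x : EReal} {b : ℝ} {r d : ℕ} (hd : 0 < d)
    (h : (b : EReal) < (x + r) / d) : ((b * d - r : ℝ) : EReal) < x := by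
  rw [← coe_coe_eq_natCast d, lt_div_iff (by exact_mod_cast hd) (coe_ne_top _)] at h
  simp only [coe_sub, coe_mul, coe_coe_eq_natCast] at h ⊢
  rwa [sub_lt_iff (.inl (natCast_ne_bot r)) (.inl (natCast_ne_top r))]

end EReal

section ShiftBound

variable {F : ℕ → EReal} {p : ℕ}

lemma exists_le_linear_of_le_add_shift (hp : 0 < p) {c : ℝ}
    (hstep : ∀ m, 1 ≤ m → F (p + m) ≤ c + F m) (htop : ∀ m, 1 ≤ m → F m < ⊤) :
    ∃ B : ℝ, ∀ N, 1 ≤ N → F N ≤ ((N * (c / p) + B : ℝ) : EReal) := by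
  obtain ⟨B, hB⟩ := ((Set.finite_Icc 1 p).image
    fun m : ℕ => (F m).toReal - m * (c / p)).bddAbove
  -- `F N - N c / p ≤ B` holds on the first period `[1, p]` and is preserved by shifting by `p`.
  refine ⟨B, fun N => Nat.strong_induction_on N fun N ih hN => ?_⟩
  rcases le_or_gt N p with hNp | hpN
  · have hFN : (F N).toReal - N * (c / p) ≤ B := hB ⟨N, ⟨hN, hNp⟩, rfl⟩
    calc F N ≤ (F N).toReal := EReal.le_coe_toReal (htop N hN).ne
      _ ≤ ((N * (c / p) + B : ℝ) : EReal) := EReal.coe_le_coe_iff.2 (by linarith)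
  · obtain ⟨m, rfl⟩ := Nat.exists_eq_add_of_lt hpN
    have hp' : (p : ℝ) ≠ 0 := by exact_mod_cast hp.ne'
    calc F (p + m + 1) ≤ c + F (m + 1) := by simpa only [add_assoc] using hstep (m + 1) (by omega)
      _ ≤ c + (((m + 1 : ℕ) * (c / p) + B : ℝ) : EReal) := by
          gcongr; exact ih _ (by omega) (by omega)
      _ = (((p + m + 1 : ℕ) * (c / p) + B : ℝ) : EReal) := by
          rw [← EReal.coe_add]; congr 1; push_cast; field_simp; ring

lemma limsup_div_le_of_le_linear {a B : ℝ}
    (h : ∀ N, 1 ≤ N → F N ≤ ((N * a + B : ℝ) : EReal)) :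
    limsup (fun N => F N / N) atTop ≤ a := by
  have hev : ∀ᶠ N : ℕ in atTop, F N / N ≤ ((a + B / N : ℝ) : EReal) := by
    filter_upwards [eventually_ge_atTop 1] with N hN
    have hN0 : (N : ℝ) ≠ 0 := by positivity
    calc F N / N ≤ ((N * a + B : ℝ) : EReal) / ((N : ℝ) : EReal) := by
          rw [EReal.coe_coe_eq_natCast]
          exact EReal.div_le_div_right_of_nonneg (Nat.cast_nonneg' N) (h N hN)
      _ = ((a + B / N : ℝ) : EReal) := by rw [← EReal.coe_div]; congr 1; field_simp
  have hlim : Tendsto (fun N : ℕ => a + B / N) atTop (𝓝 a) := by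
    simpa using tendsto_const_nhds.add (tendsto_const_div_atTop_nhds_zero_nat B)
  rw [← (EReal.tendsto_coe.2 hlim).limsup_eq]
  exact limsup_le_limsup hev

lemma limsup_div_le_of_le_add_shift (hp : 0 < p) {x : EReal}
    (hstep : ∀ m, 1 ≤ m → F (p + m) ≤ x + F m) (htop : ∀ m, 1 ≤ m → F m < ⊤) :
    limsup (fun N => F N / N) atTop ≤ x / p := by
  refine EReal.le_of_forall_lt_iff_le.1 fun z hz => ?_
  have hp' : (0 : ℝ) < p := by exact_mod_cast hp
  rw [← EReal.coe_coe_eq_natCast, EReal.div_lt_iff (EReal.coe_pos.2 hp') (EReal.coe_ne_top _),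
    ← EReal.coe_mul] at hz
  obtain ⟨B, hB⟩ := exists_le_linear_of_le_add_shift hp
    (fun m hm => (hstep m hm).trans (by gcongr)) htop
  simpa [hp'.ne'] using limsup_div_le_of_le_linear hB

end ShiftBound

lemma le_liminf_div_of_le_gapped_ratio {F : ℕ → EReal} {σ R : ℕ → ℕ} {L : EReal}
    (hσ : Tendsto (fun n => (σ n : ℝ) / n) atTop (𝓝 0))
    (hR : Tendsto (fun n => (R n : ℝ) / n) atTop (𝓝 0))
    (hL : ∀ n, 1 ≤ n → L ≤ (F n + R n) / ((n : EReal) + σ n)) :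
    L ≤ liminf (fun n => F n / n) atTop := by
  refine EReal.ge_of_forall_gt_iff_ge.1 fun b hb => ?_
  have hev : ∀ᶠ n : ℕ in atTop,
      (((b * (n + σ n : ℕ) - R n) / n : ℝ) : EReal) ≤ F n / n := by
    filter_upwards [eventually_ge_atTop 1] with n hn
    have hlt := EReal.coe_mul_sub_lt_of_lt_add_div (x := F n) (r := R n) (d := n + σ n) (by omega)
      ((hb.trans_le (hL n hn)).trans_eq (by rw [Nat.cast_add]))
    rw [EReal.coe_div, EReal.coe_coe_eq_natCast]
    exact EReal.div_le_div_right_of_nonneg (Nat.cast_nonneg' n) hlt.le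
  have hlim : Tendsto (fun n : ℕ => (b * (n + σ n : ℕ) - R n) / n) atTop (𝓝 b) := by
    have hsum := (tendsto_const_nhds (x := b)).add ((hσ.const_mul b).sub hR)
    rw [mul_zero, sub_zero, add_zero] at hsum
    refine hsum.congr' ?_
    filter_upwards [eventually_ge_atTop 1] with n hn
    have hn0 : (n : ℝ) ≠ 0 := by positivity
    push_cast
    field_simp
    ring
  rw [← (EReal.tendsto_coe.2 hlim).liminf_eq]
  exact liminf_le_liminf hev

/-- **Gapped Fekete lemma.**  If `F : ℕ → [-∞, ∞)` satisfies the gapped almost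
subadditivity condition `F (n + σ n + m) ≤ F n + R n + F m` for all `n, m ≥ 1`,
with nonnegative integer sequences `σ` and `R` that are `o(n)`, then `F n / n`
converges to `inf_{n ≥ 1} (F n + R n) / (n + σ n)` in `[-∞, ∞)`. -/
theorem gapped_fekete (F : ℕ → EReal) (hFtop : ∀ n, 1 ≤ n → F n < ⊤)
    (σ R : ℕ → ℕ)
    (hσ : Filter.Tendsto (fun n => (σ n : ℝ) / n) Filter.atTop (𝓝 0))
    (hR : Filter.Tendsto (fun n => (R n : ℝ) / n) Filter.atTop (𝓝 0))
    (hsub : ∀ n m, 1 ≤ n → 1 ≤ m →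
      F (n + σ n + m) ≤ F n + (R n : EReal) + F m) :
    (⨅ n ∈ Set.Ici 1, (F n + (R n : EReal)) / ((n : EReal) + (σ n : EReal))) < ⊤ ∧
    Filter.Tendsto (fun n => F n / (n : EReal)) Filter.atTop
      (𝓝 (⨅ n ∈ Set.Ici 1, (F n + (R n : EReal)) / ((n : EReal) + (σ n : EReal)))) := by
  set L := ⨅ n ∈ Set.Ici 1, (F n + (R n : EReal)) / ((n : EReal) + (σ n : EReal))
  have hL : ∀ n, 1 ≤ n → L ≤ (F n + (R n : EReal)) / ((n : EReal) + (σ n : EReal)) :=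
    fun n hn => biInf_le _ hn
  refine ⟨(hL 1 le_rfl).trans_lt ?_, tendsto_of_le_liminf_of_limsup_le
    (le_liminf_div_of_le_gapped_ratio hσ hR hL) (le_iInf₂ fun n (hn : 1 ≤ n) => ?_)⟩
  · have hpos : (0 : EReal) < ((1 + σ 1 : ℕ) : EReal) := by
      exact_mod_cast (by omega : 0 < 1 + σ 1)
    rw [← Nat.cast_add, EReal.div_lt_iff hpos (EReal.natCast_ne_top _), EReal.top_mul_of_pos hpos]
    exact EReal.add_lt_top (hFtop 1 le_rfl).ne (EReal.natCast_ne_top _)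
  · rw [← Nat.cast_add]
    exact limsup_div_le_of_le_add_shift (by omega) (hsub n · hn) hFtop
end

section
/- Let 𝒜 be a finite nonempty alphabet and let ℙ and ℚ be shift-invariant probability measures on 𝒜^ℕ. Suppose ℚ satisfies the upper-decoupling condition: there exist sequences (c_n)_{n∈ℕ} of nonnegative reals and (τ_n)_{n∈ℕ} of nonnegative integers with c_n/n → 0 and τ_n/n → 0 such that ℚ{x : x_1^n = a, x_{n+τ_n+1}^{n+τ_n+m} = b} ≤ e^{c_n} ℚ{x : x_1^n = a} · ℚ{x : x_{n+τ_n+1}^{n+τ_n+m} = b} for all a ∈ 𝒜^n, n ∈ ℕ, b ∈ 𝒜^m, m ∈ ℕ. Then the (possibly infinite) specific relative entropy of ℙ with respect to ℚ exists; that is, the limit lim_{n→∞} (1/n) D(ℙ_n ‖ ℚ_n) exists in [0, ∞], where ℙ_n and ℚ_n are the marginals of ℙ and ℚ on 𝒜^n (the pushforwards along x ↦ x_1^n) and D(·‖·) is the relative entropy (Kullback–Leibler divergence). -/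
open Filter Topology MeasureTheory

open Classical in
/-- The relative entropy (Kullback–Leibler divergence) `D(p‖q) = Σ_b p(b) log(p(b)/q(b))`
of two measures on a finite type, with the conventions `0 · log(0/q) = 0` and
`D(p‖q) = ∞` when `p` is not absolutely continuous with respect to `q`. -/
noncomputable def finRelEnt {B : Type*} [Fintype B] [MeasurableSpace B]
    (p q : Measure B) : EReal :=
  if ∀ b : B, q {b} = 0 → p {b} = 0 then
    ((∑ b : B, (p {b}).toReal * Real.log ((p {b}).toReal / (q {b}).toReal) : ℝ) : EReal)
  else ⊤

/-!
Write `d n = D(ℙ_n ‖ ℚ_n)`. If some `ℙ_n` is not absolutely continuous with respect to `ℚ_n`,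
then neither is any later marginal, and `d n / n` is eventually `∞`. Otherwise, for
`N = n + τ_n + m`, apply the data processing inequality to `x_1^N ↦ (x_1^n, x_{n+τ_n+1}^N)`:
the image of `ℚ_N` is at most `e^{c_n} ℚ_n ⊗ ℚ_m` by upper decoupling, the image of `ℙ_N` has
marginals `ℙ_n` and `ℙ_m` by shift invariance, and the relative entropy with respect to a
product measure dominates the sum of those of the marginals. Hence
`d n + d m - c_n ≤ d (n + τ_n + m)`, and a Fekete-type argument, which tolerates the
defects `c_n = o(n)` and gaps `τ_n = o(n)`, shows that `d n / n` converges in `[0, ∞]`.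
-/

open Real InformationTheory
open scoped ENNReal

lemma absolutelyContinuous_iff_measure_singleton {B : Type*} [Countable B] [MeasurableSpace B]
    {μ ν : Measure B} : μ ≪ ν ↔ ∀ b, ν {b} = 0 → μ {b} = 0 := by
  refine ⟨fun h b hb => h hb, fun h s hs => ?_⟩
  rw [measure_null_iff_singleton s.to_countable] at hs ⊢
  exact fun b hb => h b (hs b hb)

lemma absolutelyContinuous_of_measure_singleton_le {B : Type*} [Countable B] [MeasurableSpace B]
    {ν ρ : Measure B} {K : ℝ≥0∞} (hle : ∀ b, ν {b} ≤ K * ρ {b}) : ν ≪ ρ :=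
  absolutelyContinuous_iff_measure_singleton.2 fun b hb =>
    le_antisymm ((hle b).trans (by simp [hb])) bot_le

lemma MeasureTheory.Measure.AbsolutelyContinuous.measureReal_pos {B : Type*} [MeasurableSpace B]
    {μ ν : Measure B} [IsFiniteMeasure μ] [IsFiniteMeasure ν] (h : μ ≪ ν) {s : Set B}
    (hs : 0 < μ.real s) : 0 < ν.real s :=
  measureReal_nonneg.lt_of_ne fun h0 => hs.ne' <|
    (measureReal_eq_zero_iff (measure_ne_top _ _)).2 <|
      h <| (measureReal_eq_zero_iff (measure_ne_top _ _)).1 h0.symm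

lemma measureReal_prod_singleton {B₁ B₂ : Type*} [MeasurableSpace B₁] [MeasurableSpace B₂]
    (ν₁ : Measure B₁) (ν₂ : Measure B₂) [IsFiniteMeasure ν₁]
    [IsFiniteMeasure ν₂] (x : B₁ × B₂) :
    (ν₁.prod ν₂).real {x} = ν₁.real {x.1} * ν₂.real {x.2} := by
  rw [← measureReal_prod_prod, Set.singleton_prod_singleton]

lemma finRelEnt_of_not_absolutelyContinuous {B : Type*} [Fintype B] [MeasurableSpace B]
    {p q : Measure B} (h : ¬ p ≪ q) : finRelEnt p q = ⊤ := by
  rw [finRelEnt, if_neg (mt absolutelyContinuous_iff_measure_singleton.2 h)]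

section FiniteKL

variable {B : Type*} [Fintype B] [MeasurableSpace B] [MeasurableSingletonClass B]

lemma toReal_klDiv_eq_sum {μ ν : Measure B} [IsProbabilityMeasure μ] [IsProbabilityMeasure ν]
    (h : μ ≪ ν) :
    (klDiv μ ν).toReal = ∑ b, μ.real {b} * log (μ.real {b} / ν.real {b}) := by
  rw [toReal_klDiv_of_measure_eq h (by simp), integral_fintype (.of_finite)]
  refine Finset.sum_congr rfl fun b _ => ?_
  by_cases hb : μ {b} = 0
  · simp [measureReal_def, hb]
  have hν : ν {b} ≠ 0 := fun h0 => hb (h h0)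
  have hmass : μ.rnDeriv ν b * ν {b} = μ {b} := by
    rw [← lintegral_singleton, Measure.setLIntegral_rnDeriv h]
  have hrn : μ.rnDeriv ν b = μ {b} / ν {b} := by
    rw [ENNReal.eq_div_iff hν (measure_ne_top _ _), mul_comm, hmass]
  simp [llr, hrn, ENNReal.toReal_div, measureReal_def]

lemma finRelEnt_of_absolutelyContinuous {p q : Measure B} [IsProbabilityMeasure p]
    [IsProbabilityMeasure q] (h : p ≪ q) : finRelEnt p q = ((klDiv p q).toReal : EReal) := by
  rw [finRelEnt, if_pos (absolutelyContinuous_iff_measure_singleton.1 h), toReal_klDiv_eq_sum h]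
  rfl

lemma toReal_klDiv_map_le {C : Type*} [MeasurableSpace C] {μ ν : Measure B}
    [IsFiniteMeasure μ] [IsFiniteMeasure ν] (h : μ ≪ ν) (f : B → C) :
    (klDiv (μ.map f) (ν.map f)).toReal ≤ (klDiv μ ν).toReal :=
  ENNReal.toReal_mono (klDiv_ne_top h .of_finite) (klDiv_map_le μ ν (measurable_of_finite f))

lemma sum_measureReal_mul_comp {C : Type*} [Fintype C] [MeasurableSpace C]
    [MeasurableSingletonClass C] (μ : Measure B) [IsFiniteMeasure μ] (f : B → C) (g : C → ℝ) :
    ∑ b, μ.real {b} * g (f b) = ∑ c, (μ.map f).real {c} * g c := by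
  have := integral_map (measurable_of_finite f).aemeasurable
    (Measurable.of_discrete (f := g)).aestronglyMeasurable (μ := μ)
  simpa [integral_fintype (.of_finite)] using this.symm

lemma measureReal_singleton_le_map {C : Type*} [MeasurableSpace C] [MeasurableSingletonClass C]
    (μ : Measure B) [IsFiniteMeasure μ] (f : B → C) (b : B) :
    μ.real {b} ≤ (μ.map f).real {f b} := by
  rw [map_measureReal_apply (measurable_of_finite f) (measurableSet_singleton _)]
  exact measureReal_mono (by simp)

variable {μ ν ρ : Measure B} [IsProbabilityMeasure μ] [IsProbabilityMeasure ν]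
  [IsProbabilityMeasure ρ]

lemma toReal_klDiv_sub_le_of_measure_singleton_le (hμν : μ ≪ ν) (c : ℝ)
    (hle : ∀ b, ν {b} ≤ ENNReal.ofReal (exp c) * ρ {b}) :
    (klDiv μ ρ).toReal - c ≤ (klDiv μ ν).toReal := by
  have hμρ : μ ≪ ρ := hμν.trans (absolutelyContinuous_of_measure_singleton_le hle)
  have hle' : ∀ b, ν.real {b} ≤ exp c * ρ.real {b} := fun b => by
    simpa [measureReal_def, ENNReal.toReal_mul, (exp_pos c).le] using
      ENNReal.toReal_mono (by finiteness) (hle b)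
  have hterm : ∀ b, μ.real {b} * log (μ.real {b} / ρ.real {b}) ≤
      μ.real {b} * log (μ.real {b} / ν.real {b}) + c * μ.real {b} := fun b => by
    rcases (measureReal_nonneg (μ := μ) (s := {b})).eq_or_lt with hb | hb
    · simp [← hb]
    have hνb := hμν.measureReal_pos hb
    have hρb := hμρ.measureReal_pos hb
    have hlog : log (μ.real {b} / ρ.real {b}) - c ≤ log (μ.real {b} / ν.real {b}) := by
      rw [← log_exp c, ← log_div (div_pos hb hρb).ne' (exp_pos c).ne', div_div]
      refine log_le_log (div_pos hb (by positivity)) (div_le_div_of_nonneg_left hb.le hνb ?_)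
      linarith [hle' b]
    nlinarith
  calc (klDiv μ ρ).toReal - c
      ≤ ∑ b, (μ.real {b} * log (μ.real {b} / ν.real {b}) + c * μ.real {b}) - c := by
        rw [toReal_klDiv_eq_sum hμρ]; gcongr with b; exact hterm b
    _ = (klDiv μ ν).toReal := by
        rw [Finset.sum_add_distrib, ← Finset.mul_sum, sum_measureReal_singleton,
          Finset.coe_univ, probReal_univ, toReal_klDiv_eq_sum hμν]; ring

end FiniteKL

section Product

variable {B₁ B₂ : Type*} [Fintype B₁] [Fintype B₂] [MeasurableSpace B₁] [MeasurableSpace B₂]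
  [MeasurableSingletonClass B₁] [MeasurableSingletonClass B₂]

lemma absolutelyContinuous_prod_map_fst_map_snd (μ : Measure (B₁ × B₂)) [IsFiniteMeasure μ] :
    μ ≪ (μ.map Prod.fst).prod (μ.map Prod.snd) := by
  refine absolutelyContinuous_iff_measure_singleton.2 fun x hx => ?_
  rw [← Set.singleton_prod_singleton, Measure.prod_prod, mul_eq_zero,
    Measure.map_apply measurable_fst (measurableSet_singleton _),
    Measure.map_apply measurable_snd (measurableSet_singleton _)] at hx
  rcases hx with hx | hx <;> exact measure_mono_null (by simp) hx

theorem toReal_klDiv_map_fst_add_map_snd_le {μ : Measure (B₁ × B₂)} {ν₁ : Measure B₁}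
    {ν₂ : Measure B₂} [IsProbabilityMeasure μ] [IsProbabilityMeasure ν₁] [IsProbabilityMeasure ν₂]
    (h : μ ≪ ν₁.prod ν₂) :
    (klDiv (μ.map Prod.fst) ν₁).toReal + (klDiv (μ.map Prod.snd) ν₂).toReal ≤
      (klDiv μ (ν₁.prod ν₂)).toReal := by
  set μ₁ := μ.map Prod.fst
  set μ₂ := μ.map Prod.snd
  have : IsProbabilityMeasure μ₁ := Measure.isProbabilityMeasure_map measurable_fst.aemeasurable
  have : IsProbabilityMeasure μ₂ := Measure.isProbabilityMeasure_map measurable_snd.aemeasurable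
  have h₁ : μ₁ ≪ ν₁ := by simpa using h.map measurable_fst
  have h₂ : μ₂ ≪ ν₂ := by simpa using h.map measurable_snd
  have hind := absolutelyContinuous_prod_map_fst_map_snd μ
  -- the defect is the mutual information `D(μ ‖ μ₁ ⊗ μ₂) ≥ 0`
  have hterm : ∀ x : B₁ × B₂, μ.real {x} * log (μ.real {x} / (ν₁.prod ν₂).real {x}) =
      μ.real {x} * log (μ.real {x} / (μ₁.prod μ₂).real {x}) +
        μ.real {x} * log (μ₁.real {x.1} / ν₁.real {x.1}) +
        μ.real {x} * log (μ₂.real {x.2} / ν₂.real {x.2}) := fun x => by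
    rcases (measureReal_nonneg (μ := μ) (s := {x})).eq_or_lt with hx | hx
    · simp [← hx]
    have hx₁ : 0 < μ₁.real {x.1} := hx.trans_le (measureReal_singleton_le_map μ _ x)
    have hx₂ : 0 < μ₂.real {x.2} := hx.trans_le (measureReal_singleton_le_map μ _ x)
    have hy₁ := h₁.measureReal_pos hx₁
    have hy₂ := h₂.measureReal_pos hx₂
    rw [measureReal_prod_singleton, measureReal_prod_singleton, ← mul_add, ← mul_add,
      ← log_mul, ← log_mul]
    · congr 2; field_simp
    all_goals exact (by apply_rules [div_pos, mul_pos] : (0:ℝ) < _).ne'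
  have hsum₁ := sum_measureReal_mul_comp μ Prod.fst fun a => log (μ₁.real {a} / ν₁.real {a})
  have hsum₂ := sum_measureReal_mul_comp μ Prod.snd fun b => log (μ₂.real {b} / ν₂.real {b})
  have hgibbs : 0 ≤ (klDiv μ (μ₁.prod μ₂)).toReal := ENNReal.toReal_nonneg
  rw [toReal_klDiv_eq_sum hind] at hgibbs
  rw [toReal_klDiv_eq_sum h, toReal_klDiv_eq_sum h₁, toReal_klDiv_eq_sum h₂,
    Finset.sum_congr rfl fun x _ => hterm x, Finset.sum_add_distrib, Finset.sum_add_distrib,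
    hsum₁, hsum₂]
  linarith

end Product

section SuperadditiveGap

variable {d c : ℕ → ℝ} {τ : ℕ → ℕ}

lemma le_of_superadditive_gap_iterate
    (hsup : ∀ n m, 1 ≤ n → 1 ≤ m → d n + d m - c n ≤ d (n + τ n + m))
    {n m : ℕ} (hn : 1 ≤ n) (hm : 1 ≤ m) (k : ℕ) :
    k * (d n - c n) + d m ≤ d (k * (n + τ n) + m) := by
  induction k with
  | zero => simp
  | succ k ih =>
    have := hsup n (k * (n + τ n) + m) hn (hm.trans (Nat.le_add_left _ _))
    rw [show (k + 1) * (n + τ n) + m = n + τ n + (k * (n + τ n) + m) by ring]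
    push_cast
    linarith

lemma sub_div_le_div_of_superadditive_gap (hd : ∀ n, 0 ≤ d n)
    (hsup : ∀ n m, 1 ≤ n → 1 ≤ m → d n + d m - c n ≤ d (n + τ n + m))
    {n N : ℕ} (hn : 1 ≤ n) (hN : 1 ≤ N) (hr : 0 ≤ d n - c n) :
    (d n - c n) / (n + τ n) - (d n - c n) / N ≤ d N / N := by
  set s := n + τ n
  -- `N = k * s + m` with `1 ≤ m ≤ s`
  set k := (N - 1) / s
  have hs : 0 < s := by omega
  have hks : k * s ≤ N - 1 := Nat.div_mul_le_self _ _
  have hNk : N - 1 < k * s + s := Nat.lt_div_mul_add hs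
  have hiter := le_of_superadditive_gap_iterate hsup hn (show 1 ≤ N - k * s by omega) k
  rw [show k * s + (N - k * s) = N by omega] at hiter
  have hkd : k * (d n - c n) ≤ d N := by linarith [hd (N - k * s)]
  have hsR : (0 : ℝ) < s := by exact_mod_cast hs
  have hNkR : (N : ℝ) ≤ k * s + s := by exact_mod_cast (show N ≤ k * s + s by omega)
  have hlhs : (d n - c n) / (n + τ n) - (d n - c n) / N = ((N - s) / s) * (d n - c n) / N := by
    simp only [s]; push_cast; field_simp
  rw [hlhs]
  gcongr
  calc (N - s) / s * (d n - c n) ≤ k * (d n - c n) := by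
        gcongr; rw [div_le_iff₀ hsR]; linarith
    _ ≤ d N := hkd

lemma coe_div_le_liminf_of_superadditive_gap (hd : ∀ n, 0 ≤ d n)
    (hsup : ∀ n m, 1 ≤ n → 1 ≤ m → d n + d m - c n ≤ d (n + τ n + m)) {n : ℕ} (hn : 1 ≤ n) :
    (((d n - c n) / (n + τ n) : ℝ) : EReal) ≤
      liminf (fun N : ℕ => ((d N / N : ℝ) : EReal)) atTop := by
  rcases le_or_gt (d n - c n) 0 with hr | hr
  · refine le_liminf_of_le (by isBoundedDefault) (Eventually.of_forall fun N => ?_)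
    exact EReal.coe_le_coe_iff.2 <|
      (div_nonpos_of_nonpos_of_nonneg hr (by positivity)).trans (by have := hd N; positivity)
  have hlim : Tendsto (fun N : ℕ => (((d n - c n) / (n + τ n) - (d n - c n) / N : ℝ) : EReal))
      atTop (𝓝 (((d n - c n) / (n + τ n) : ℝ) : EReal)) := by
    refine EReal.tendsto_coe.2 ?_
    simpa using tendsto_const_nhds.sub (tendsto_const_div_atTop_nhds_zero_nat (d n - c n))
  rw [← hlim.liminf_eq]
  refine liminf_le_liminf ((eventually_ge_atTop 1).mono fun N hN => ?_)
  exact EReal.coe_le_coe_iff.2 (sub_div_le_div_of_superadditive_gap hd hsup hn hN hr.le)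

lemma limsup_div_le_of_superadditive_gap
    (hc : Tendsto (fun n => c n / n) atTop (𝓝 0))
    (hτ : Tendsto (fun n => (τ n : ℝ) / n) atTop (𝓝 0)) {L : EReal} (hL : 0 ≤ L)
    (hlow : ∀ n, 1 ≤ n → (((d n - c n) / (n + τ n) : ℝ) : EReal) ≤ L) :
    limsup (fun N : ℕ => ((d N / N : ℝ) : EReal)) atTop ≤ L := by
  induction L using EReal.rec with
  | bot => exact absurd hL (by simp)
  | top => exact le_top
  | coe ℓ =>
    -- `hlow n` rearranges to `d n / n ≤ (1 + τ n / n) * ℓ + c n / n`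
    have hu : Tendsto (fun n : ℕ => (1 + τ n / n) * ℓ + c n / n) atTop (𝓝 ℓ) := by
      simpa using (((tendsto_const_nhds (x := (1 : ℝ))).add hτ).mul_const ℓ).add hc
    rw [← (EReal.tendsto_coe.2 hu).limsup_eq]
    refine limsup_le_limsup ((eventually_ge_atTop 1).mono fun n hn => EReal.coe_le_coe_iff.2 ?_)
    have hnR : (0 : ℝ) < n := by exact_mod_cast hn
    have h := EReal.coe_le_coe_iff.1 (hlow n hn)
    rw [div_le_iff₀ (by positivity)] at h
    have hrhs : (1 + τ n / n) * ℓ + c n / n = (ℓ * (n + τ n) + c n) / n := by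
      field_simp
    rw [hrhs]
    gcongr
    linarith

theorem exists_tendsto_div_of_superadditive_gap (hd : ∀ n, 0 ≤ d n)
    (hc : Tendsto (fun n => c n / n) atTop (𝓝 0))
    (hτ : Tendsto (fun n => (τ n : ℝ) / n) atTop (𝓝 0))
    (hsup : ∀ n m, 1 ≤ n → 1 ≤ m → d n + d m - c n ≤ d (n + τ n + m)) :
    ∃ L : EReal, 0 ≤ L ∧ Tendsto (fun n : ℕ => ((d n / n : ℝ) : EReal)) atTop (𝓝 L) := by
  have hL : 0 ≤ liminf (fun N : ℕ => ((d N / N : ℝ) : EReal)) atTop :=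
    le_liminf_of_le (by isBoundedDefault) (Eventually.of_forall fun N => by
      have := hd N; exact EReal.coe_nonneg.2 (by positivity))
  refine ⟨_, hL, tendsto_of_liminf_eq_limsup rfl (le_antisymm ?_ liminf_le_limsup)⟩
  exact limsup_div_le_of_superadditive_gap hc hτ hL fun n hn =>
    coe_div_le_liminf_of_superadditive_gap hd hsup hn

end SuperadditiveGap

section SequenceSpace

variable {A : Type*}

-- Coordinates are indexed from `0`, so `blockProj k n x` is the word `x_{k+1}^{k+n}`.
def blockProj (k n : ℕ) (x : ℕ → A) : Fin n → A := fun i => x (i + k)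

def pairBlockProj (n k m : ℕ) (x : ℕ → A) : (Fin n → A) × (Fin m → A) :=
  (blockProj 0 n x, blockProj k m x)

lemma shift_iterate_apply (k : ℕ) (x : ℕ → A) (i : ℕ) :
    (fun (x : ℕ → A) j => x (j + 1))^[k] x i = x (i + k) := by
  induction k generalizing i with
  | zero => rfl
  | succ k ih => rw [Function.iterate_succ_apply', ih]; congr 1; omega

variable [MeasurableSpace A]

lemma measurable_blockProj (k n : ℕ) : Measurable (blockProj (A := A) k n) :=
  measurable_pi_lambda _ fun _ => measurable_pi_apply _

lemma measurable_pairBlockProj (n k m : ℕ) : Measurable (pairBlockProj (A := A) n k m) :=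
  (measurable_blockProj 0 n).prodMk (measurable_blockProj k m)

instance (P : Measure (ℕ → A)) [IsProbabilityMeasure P] (k n : ℕ) :
    IsProbabilityMeasure (P.map (blockProj k n)) :=
  Measure.isProbabilityMeasure_map (measurable_blockProj k n).aemeasurable

instance (P : Measure (ℕ → A)) [IsProbabilityMeasure P] (n k m : ℕ) :
    IsProbabilityMeasure (P.map (pairBlockProj n k m)) :=
  Measure.isProbabilityMeasure_map (measurable_pairBlockProj n k m).aemeasurable

lemma map_blockProj_of_measurePreserving {P : Measure (ℕ → A)}
    (hP : MeasurePreserving (fun x k => x (k + 1)) P P) (k n : ℕ) :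
    P.map (blockProj k n) = P.map (blockProj 0 n) := by
  have h : blockProj k n = blockProj 0 n ∘ (fun (x : ℕ → A) j => x (j + 1))^[k] := by
    funext x i
    simp [blockProj, shift_iterate_apply]
  rw [h, ← Measure.map_map (measurable_blockProj 0 n) (hP.iterate k).measurable,
    (hP.iterate k).map_eq]

noncomputable def marginalKL (P Q : Measure (ℕ → A)) (n : ℕ) : ℝ :=
  (klDiv (P.map (blockProj 0 n)) (Q.map (blockProj 0 n))).toReal

variable [Fintype A] [MeasurableSingletonClass A] {P Q : Measure (ℕ → A)}

lemma absolutelyContinuous_map_blockProj_of_le {n N : ℕ} (h : n ≤ N)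
    (hac : P.map (blockProj 0 N) ≪ Q.map (blockProj 0 N)) :
    P.map (blockProj 0 n) ≪ Q.map (blockProj 0 n) := by
  have hres : blockProj 0 n = (fun y (i : Fin n) => y (Fin.castLE h i)) ∘ blockProj (A := A) 0 N :=
    rfl
  rw [hres, ← Measure.map_map (measurable_of_finite _) (measurable_blockProj 0 N),
    ← Measure.map_map (measurable_of_finite _) (measurable_blockProj 0 N)]
  exact hac.map (measurable_of_finite _)

variable [IsProbabilityMeasure P] [IsProbabilityMeasure Q]

lemma marginalKL_add_sub_le (hP : MeasurePreserving (fun x k => x (k + 1)) P P)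
    (hQ : MeasurePreserving (fun x k => x (k + 1)) Q Q) {n k m : ℕ} (hnk : n ≤ k)
    (hac : P.map (blockProj 0 (k + m)) ≪ Q.map (blockProj 0 (k + m))) (c : ℝ)
    (hdec : ∀ (a : Fin n → A) (b : Fin m → A),
      Q {x | (∀ i : Fin n, x i = a i) ∧ ∀ j : Fin m, x (k + j) = b j} ≤
        ENNReal.ofReal (exp c) * Q {x | ∀ i : Fin n, x i = a i} *
          Q {x | ∀ j : Fin m, x (k + j) = b j}) :
    marginalKL P Q n + marginalKL P Q m - c ≤ marginalKL P Q (k + m) := by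
  set T : (Fin (k + m) → A) → (Fin n → A) × (Fin m → A) :=
    fun y => (fun i => y ⟨i, by omega⟩, fun j => y ⟨j + k, by omega⟩)
  have hmapT : ∀ μ : Measure (ℕ → A),
      μ.map (pairBlockProj n k m) = (μ.map (blockProj 0 (k + m))).map T := fun μ => by
    rw [Measure.map_map (measurable_of_finite T) (measurable_blockProj 0 (k + m))]
    rfl
  set ρ := (Q.map (blockProj 0 n)).prod (Q.map (blockProj 0 m))
  have hJ : P.map (pairBlockProj n k m) ≪ Q.map (pairBlockProj n k m) := by
    rw [hmapT, hmapT]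
    exact hac.map (measurable_of_finite T)
  have hρ : ∀ x, Q.map (pairBlockProj n k m) {x} ≤ ENNReal.ofReal (exp c) * ρ {x} := by
    rintro ⟨a, b⟩
    rw [show ρ {(a, b)} = Q.map (blockProj 0 n) {a} * Q.map (blockProj 0 m) {b} by
        rw [← Measure.prod_prod, Set.singleton_prod_singleton],
      ← map_blockProj_of_measurePreserving hQ k m, ← mul_assoc,
      Measure.map_apply (measurable_pairBlockProj n k m) (measurableSet_singleton _),
      Measure.map_apply (measurable_blockProj 0 n) (measurableSet_singleton _),
      Measure.map_apply (measurable_blockProj k m) (measurableSet_singleton _)]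
    convert hdec a b using 4 <;> ext x <;> simp [pairBlockProj, blockProj, funext_iff, add_comm]
  have hfst : (P.map (pairBlockProj n k m)).map Prod.fst = P.map (blockProj 0 n) := by
    rw [Measure.map_map measurable_fst (measurable_pairBlockProj n k m)]
    rfl
  have hsnd : (P.map (pairBlockProj n k m)).map Prod.snd = P.map (blockProj 0 m) := by
    rw [Measure.map_map measurable_snd (measurable_pairBlockProj n k m)]
    exact map_blockProj_of_measurePreserving hP k m
  calc marginalKL P Q n + marginalKL P Q m - c
      ≤ (klDiv (P.map (pairBlockProj n k m)) ρ).toReal - c := by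
        unfold marginalKL
        rw [← hfst, ← hsnd]
        gcongr
        exact toReal_klDiv_map_fst_add_map_snd_le
          (hJ.trans (absolutelyContinuous_of_measure_singleton_le hρ))
    _ ≤ (klDiv (P.map (pairBlockProj n k m)) (Q.map (pairBlockProj n k m))).toReal :=
        toReal_klDiv_sub_le_of_measure_singleton_le hJ c hρ
    _ ≤ marginalKL P Q (k + m) := by
        rw [hmapT P, hmapT Q]
        exact toReal_klDiv_map_le hac T

end SequenceSpace

theorem specific_relative_entropy_exists_general
    {A : Type*} [Fintype A]
    [MeasurableSpace A] [MeasurableSingletonClass A]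
    (P Q : Measure (ℕ → A)) [IsProbabilityMeasure P] [IsProbabilityMeasure Q]
    (hP : MeasurePreserving (fun x k => x (k + 1)) P P)
    (hQ : MeasurePreserving (fun x k => x (k + 1)) Q Q)
    (c : ℕ → ℝ) (τ : ℕ → ℕ)
    (hc : Filter.Tendsto (fun n => c n / n) Filter.atTop (𝓝 0))
    (hτ : Filter.Tendsto (fun n => (τ n : ℝ) / n) Filter.atTop (𝓝 0))
    (hdec : ∀ (n m : ℕ), 1 ≤ n → 1 ≤ m → ∀ (a : Fin n → A) (b : Fin m → A),
      Q {x | (∀ i : Fin n, x (i : ℕ) = a i) ∧ (∀ j : Fin m, x (n + τ n + (j : ℕ)) = b j)}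
        ≤ ENNReal.ofReal (Real.exp (c n)) * Q {x | ∀ i : Fin n, x (i : ℕ) = a i}
          * Q {x | ∀ j : Fin m, x (n + τ n + (j : ℕ)) = b j}) :
    ∃ L : EReal, 0 ≤ L ∧
      Filter.Tendsto
        (fun n : ℕ =>
          finRelEnt (P.map (fun x (i : Fin n) => x (i : ℕ)))
              (Q.map (fun x (i : Fin n) => x (i : ℕ))) / (n : EReal))
        Filter.atTop (𝓝 L) := by
  by_cases hac : ∀ n, P.map (blockProj 0 n) ≪ Q.map (blockProj 0 n)
  · obtain ⟨L, hL0, hL⟩ := exists_tendsto_div_of_superadditive_gap (d := marginalKL P Q)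
      (fun n => ENNReal.toReal_nonneg) hc hτ fun n m hn hm =>
        marginalKL_add_sub_le hP hQ (Nat.le_add_right n (τ n)) (hac _) (c n) (hdec n m hn hm)
    refine ⟨L, hL0, hL.congr fun n => ?_⟩
    change _ = finRelEnt (P.map (blockProj 0 n)) (Q.map (blockProj 0 n)) / n
    rw [finRelEnt_of_absolutelyContinuous (hac n), EReal.coe_div]
    rfl
  · obtain ⟨n₀, hn₀⟩ := not_forall.1 hac
    refine ⟨⊤, le_top, tendsto_const_nhds.congr' ?_⟩
    filter_upwards [eventually_gt_atTop n₀] with N hN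
    change _ = finRelEnt (P.map (blockProj 0 N)) (Q.map (blockProj 0 N)) / N
    rw [finRelEnt_of_not_absolutelyContinuous
      (mt (absolutelyContinuous_map_blockProj_of_le hN.le) hn₀)]
    exact (EReal.top_div_of_pos_ne_top (by exact_mod_cast (n₀.zero_le.trans_lt hN))
      (EReal.natCast_ne_top N)).symm

/-- **Existence of the specific relative entropy under upper decoupling.**
If `ℙ` and `ℚ` are shift-invariant probability measures on `𝒜^ℕ` (with `𝒜` a finite
nonempty alphabet) and `ℚ` satisfies the upper-decoupling condition with `o(n)` constants
`c_n` and gaps `τ_n`, then the specific relative entropy `lim_n (1/n) D(ℙ_n ‖ ℚ_n)`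
exists in `[0, ∞]`, where `ℙ_n`, `ℚ_n` are the marginals on `𝒜^n`. -/
theorem specific_relative_entropy_exists
    {A : Type*} [Fintype A] [Nonempty A]
    [MeasurableSpace A] [MeasurableSingletonClass A]
    (P Q : Measure (ℕ → A)) [IsProbabilityMeasure P] [IsProbabilityMeasure Q]
    (hP : MeasurePreserving (fun x k => x (k + 1)) P P)
    (hQ : MeasurePreserving (fun x k => x (k + 1)) Q Q)
    (c : ℕ → ℝ) (hc_nonneg : ∀ n, 1 ≤ n → 0 ≤ c n) (τ : ℕ → ℕ)
    (hc : Filter.Tendsto (fun n => c n / n) Filter.atTop (𝓝 0))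
    (hτ : Filter.Tendsto (fun n => (τ n : ℝ) / n) Filter.atTop (𝓝 0))
    (hdec : ∀ (n m : ℕ), 1 ≤ n → 1 ≤ m → ∀ (a : Fin n → A) (b : Fin m → A),
      Q {x | (∀ i : Fin n, x (i : ℕ) = a i) ∧ (∀ j : Fin m, x (n + τ n + (j : ℕ)) = b j)}
        ≤ ENNReal.ofReal (Real.exp (c n)) * Q {x | ∀ i : Fin n, x (i : ℕ) = a i}
          * Q {x | ∀ j : Fin m, x (n + τ n + (j : ℕ)) = b j}) :
    ∃ L : EReal, 0 ≤ L ∧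
      Filter.Tendsto
        (fun n : ℕ =>
          finRelEnt (P.map (fun x (i : Fin n) => x (i : ℕ)))
              (Q.map (fun x (i : Fin n) => x (i : ℕ))) / (n : EReal))
        Filter.atTop (𝓝 L) :=
  specific_relative_entropy_exists_general P Q hP hQ c τ hc hτ hdec
end

section
/- Let (X, 𝓕, μ, T) be a measure-preserving dynamical system with μ a probability measure. Let (f_n)_{n∈ℕ} be measurable real-valued functions, let ρ_1 be a nonnegative measurable function that is finite μ-almost surely, and suppose that for every m ∈ ℕ, μ-almost surely f_{1+m} ≤ f_1 + ρ_1 + f_m ∘ T. Then the extended-real-valued function f(x) := liminf_{n→∞} f_n(x)/n satisfies f ∘ T = f μ-almost surely. -/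
/-!
Subadditivity gives `f_{m+1}(x) ≤ f_m(T x) + c(x)` with `c(x)` finite, and dividing by `m`
shows `f ≤ f ∘ T` almost everywhere. Since `T` preserves the finite measure `μ`, each sublevel set
`{f ≤ q}` has the same measure as its preimage `{f ∘ T ≤ q}`, which it contains up to a null set;
so the two sets agree a.e., and running `q` over a countable dense set forces `f ∘ T = f` a.e.
-/

open Filter Topology MeasureTheory

namespace MeasureTheory.MeasurePreserving

variable {X : Type*} [MeasurableSpace X] {μ : Measure X} [IsFiniteMeasure μ] {T : X → X}

theorem preimage_ae_eq_of_preimage_ae_subset (hT : MeasurePreserving T μ μ) {A : Set X}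
    (hA : NullMeasurableSet A μ) (hsub : T ⁻¹' A ≤ᵐ[μ] A) : T ⁻¹' A =ᵐ[μ] A :=
  ae_eq_of_ae_subset_of_measure_ge hsub (hT.measure_preimage hA).ge
    (hA.preimage hT.quasiMeasurePreserving) (measure_ne_top μ A)

theorem ae_comp_eq_of_ae_le_comp {β : Type*} [LinearOrder β] [TopologicalSpace β]
    [OrderTopology β] [DenselyOrdered β] [TopologicalSpace.SeparableSpace β]
    [MeasurableSpace β] [OpensMeasurableSpace β]
    (hT : MeasurePreserving T μ μ) {F : X → β} (hF : Measurable F) (hle : F ≤ᵐ[μ] F ∘ T) :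
    F ∘ T =ᵐ[μ] F := by
  obtain ⟨S, hS_countable, hS_dense⟩ := TopologicalSpace.exists_countable_dense β
  have hsublevel : ∀ q, T ⁻¹' {x | F x ≤ q} =ᵐ[μ] {x | F x ≤ q} := fun q =>
    hT.preimage_ae_eq_of_preimage_ae_subset (hF measurableSet_Iic).nullMeasurableSet
      (by filter_upwards [hle] with x hx using hx.trans)
  have hsublevel_all : ∀ᵐ x ∂μ, ∀ q ∈ S, (F (T x) ≤ q) = (F x ≤ q) :=
    (ae_ball_iff hS_countable).2 fun q _ => hsublevel q
  filter_upwards [hle, hsublevel_all] with x hx hq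
  refine le_antisymm (not_lt.1 fun hlt => ?_) hx
  obtain ⟨q, hqS, hxq, hqTx⟩ := hS_dense.exists_between hlt
  exact hqTx.not_ge ((hq q hqS).symm ▸ hxq.le)

end MeasureTheory.MeasurePreserving

theorem EReal.liminf_div_le_liminf_div_of_succ_le {a b : ℕ → ℝ} {c : ℝ}
    (h : ∀ᶠ m in atTop, a (m + 1) ≤ b m + c) :
    liminf (fun n : ℕ => (a n : EReal) / n) atTop ≤
      liminf (fun n : ℕ => (b n : EReal) / n) atTop := by
  simp only [← EReal.coe_coe_eq_natCast, ← EReal.coe_div]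
  refine EReal.ge_of_forall_gt_iff_ge.1 fun r hr => ?_
  have hra : ∀ᶠ m : ℕ in atTop, r < a (m + 1) / (m + 1 : ℕ) := by
    simpa using (tendsto_add_atTop_nat 1).eventually (eventually_lt_of_lt_liminf hr)
  have hrb : ∀ᶠ m : ℕ in atTop, ((r + (r - c) / m : ℝ) : EReal) ≤ (b m / m : ℝ) := by
    filter_upwards [hra, h, eventually_gt_atTop 0] with m hra hab hm
    have hm : (0 : ℝ) < m := Nat.cast_pos.2 hm
    rw [lt_div_iff₀ (by positivity)] at hra
    rw [EReal.coe_le_coe_iff, le_div_iff₀ hm, add_mul, div_mul_cancel₀ _ hm.ne']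
    push_cast at hra
    linarith
  have hlim : Tendsto (fun m : ℕ => ((r + (r - c) / m : ℝ) : EReal)) atTop (𝓝 r) :=
    EReal.tendsto_coe.2 <| by
      simpa using tendsto_const_nhds.add (_root_.tendsto_const_div_atTop_nhds_zero_nat (r - c))
  exact hlim.liminf_eq.ge.trans (liminf_le_liminf hrb)

theorem liminf_T_invariant_general
    {X : Type*} [MeasurableSpace X] (μ : Measure X) [IsProbabilityMeasure μ]
    (T : X → X) (hT : MeasurePreserving T μ μ)
    (f : ℕ → X → ℝ) (hf_meas : ∀ n, 1 ≤ n → Measurable (f n))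
    (ρ₁ : X → ENNReal) (hρ₁_fin : ∀ᵐ x ∂μ, ρ₁ x < ⊤)
    (hsub : ∀ m : ℕ, 1 ≤ m → ∀ᵐ x ∂μ,
      ((f (1 + m) x : EReal)) ≤ (f 1 x : EReal) + (ρ₁ x : EReal) + (f m (T x) : EReal)) :
    ∀ᵐ x ∂μ,
      Filter.liminf (fun n : ℕ => ((f n (T x) : EReal) / (n : EReal))) Filter.atTop
        = Filter.liminf (fun n : ℕ => ((f n x : EReal) / (n : EReal))) Filter.atTop := by
  set F : X → EReal := fun x => liminf (fun n : ℕ => (f n x : EReal) / n) atTop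
  have hF_meas : Measurable F := Measurable.liminf fun n => by
    simp only [← EReal.coe_coe_eq_natCast, ← EReal.coe_div]
    refine measurable_coe_real_ereal.comp ?_
    rcases Nat.eq_zero_or_pos n with rfl | hn
    · simp [measurable_const]
    · exact (hf_meas n hn).div_const _
  have hsub_real :
      ∀ᵐ x ∂μ, ∀ m ≥ 1, f (m + 1) x ≤ f m (T x) + (f 1 x + (ρ₁ x).toReal) := by
    filter_upwards [ae_all_iff.2 fun m => eventually_imp_distrib_left.2 (hsub m), hρ₁_fin]
      with x hx hρ m hm
    have h := hx m hm
    rw [← EReal.coe_ennreal_toReal hρ.ne, ← EReal.coe_add, ← EReal.coe_add,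
      EReal.coe_le_coe_iff, add_comm 1 m] at h
    linarith
  have hF_le : F ≤ᵐ[μ] F ∘ T := by
    filter_upwards [hsub_real] with x hx
    exact EReal.liminf_div_le_liminf_div_of_succ_le (eventually_atTop.2 ⟨1, hx⟩)
  exact hT.ae_comp_eq_of_ae_le_comp hF_meas hF_le

/-- **Almost sure `T`-invariance of the liminf.**  If `(f_n)` are measurable real-valued
functions on a measure-preserving dynamical system, `ρ₁` is a nonnegative measurable
function that is finite μ-a.s., and for every `m ≥ 1` one has
`f_{1+m} ≤ f_1 + ρ₁ + f_m ∘ T` μ-a.s., then `f(x) := liminf_n f_n(x)/n` (valued in the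
extended reals) satisfies `f ∘ T = f` μ-almost surely. -/
theorem liminf_T_invariant
    {X : Type*} [MeasurableSpace X] (μ : Measure X) [IsProbabilityMeasure μ]
    (T : X → X) (hT : MeasurePreserving T μ μ)
    (f : ℕ → X → ℝ) (hf_meas : ∀ n, 1 ≤ n → Measurable (f n))
    (ρ₁ : X → ENNReal) (hρ₁_meas : Measurable ρ₁) (hρ₁_fin : ∀ᵐ x ∂μ, ρ₁ x < ⊤)
    (hsub : ∀ m : ℕ, 1 ≤ m → ∀ᵐ x ∂μ,
      ((f (1 + m) x : EReal)) ≤ (f 1 x : EReal) + (ρ₁ x : EReal) + (f m (T x) : EReal)) :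
    ∀ᵐ x ∂μ,
      Filter.liminf (fun n : ℕ => ((f n (T x) : EReal) / (n : EReal))) Filter.atTop
        = Filter.liminf (fun n : ℕ => ((f n x : EReal) / (n : EReal))) Filter.atTop :=
  liminf_T_invariant_general μ T hT f hf_meas ρ₁ hρ₁_fin hsub
end

section
/- Let (X, 𝓕, μ) be a probability space, T : X → X a measurable map preserving μ, and g ∈ L¹(dμ). Let (σ_n)_{n∈ℕ} be a sequence of nonnegative integers with σ_n/n → 0. Then for μ-almost every x, g(T^{n+σ_n} x)/n → 0 as n → ∞. -/
/-!
Since `T^n` preserves `μ`, the sets `{x | |c g (T^n x)| > n}` have the same measures as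
`{x | |c g x| > n}`, whose sum over `n` is bounded by `∫ |c g| + 1`. Borel–Cantelli then gives
`c |g (T^n x)| ≤ n` eventually, for almost every `x` and all `c ∈ ℕ` simultaneously, that is
`g (T^n x) / n → 0`. The gap is harmless: `g (T^{n+σ n} x) / n` is `g (T^m x) / m` at
`m = n + σ n → ∞`, times `m / n = 1 + σ n / n → 1`.
-/

open Filter Topology MeasureTheory

lemma tendsto_div_natCast_of_eventually_mul_abs_le {u : ℕ → ℝ}
    (h : ∀ k : ℕ, ∀ᶠ n in atTop, (k + 1 : ℝ) * |u n| ≤ n) :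
    Tendsto (fun n => u n / n) atTop (𝓝 0) := by
  refine Metric.tendsto_nhds.2 fun ε hε => ?_
  obtain ⟨k, hk⟩ := exists_nat_one_div_lt hε
  filter_upwards [h k, eventually_gt_atTop 0] with n hn hn0
  have hn0' : (0 : ℝ) < n := Nat.cast_pos.2 hn0
  have hk0 : (0 : ℝ) < k + 1 := by positivity
  calc dist (u n / n) 0 = |u n| / n := by rw [Real.dist_eq, sub_zero, abs_div, Nat.abs_cast]
    _ ≤ 1 / (k + 1) := by
        rw [div_le_div_iff₀ hn0' hk0]
        linarith
    _ < ε := hk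

lemma tendsto_comp_add_div_natCast {u : ℕ → ℝ} {σ : ℕ → ℕ}
    (hu : Tendsto (fun n => u n / n) atTop (𝓝 0))
    (hσ : Tendsto (fun n => (σ n : ℝ) / n) atTop (𝓝 0)) :
    Tendsto (fun n => u (n + σ n) / n) atTop (𝓝 0) := by
  have hshift : Tendsto (fun n => u (n + σ n) / (n + σ n : ℕ)) atTop (𝓝 0) :=
    hu.comp (tendsto_atTop_mono (fun n => Nat.le_add_right n (σ n)) tendsto_id)
  have hratio : Tendsto (fun n => 1 + (σ n : ℝ) / n) atTop (𝓝 1) := by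
    simpa using tendsto_const_nhds.add hσ
  have := hshift.mul hratio
  rw [zero_mul] at this
  refine this.congr' ?_
  filter_upwards [eventually_gt_atTop 0] with n hn
  have hn0 : (n : ℝ) ≠ 0 := by positivity
  have hm0 : ((n + σ n : ℕ) : ℝ) ≠ 0 := by positivity
  field_simp
  push_cast
  ring

section MeasurePreserving

variable {X : Type*} [MeasurableSpace X] {μ : Measure X} [IsProbabilityMeasure μ] {T : X → X}

lemma MeasureTheory.MeasurePreserving.ae_eventually_abs_comp_iterate_le
    (hT : MeasurePreserving T μ μ) {f : X → ℝ} (hf : Integrable f μ) :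
    ∀ᵐ x ∂μ, ∀ᶠ n : ℕ in atTop, |f (T^[n] x)| ≤ n := by
  -- `tsum_prob_mem_Ioi_lt_top` is stated for the ambient measure `ℙ = volume`.
  let : MeasureSpace X := ⟨μ⟩
  have hsum : (∑' n : ℕ, μ {x | |f x| ∈ Set.Ioi (n : ℝ)}) < ⊤ :=
    ProbabilityTheory.tsum_prob_mem_Ioi_lt_top hf.abs fun x => abs_nonneg (f x)
  have hiterate : ∀ n : ℕ, μ {x | |f (T^[n] x)| ∈ Set.Ioi (n : ℝ)}
      = μ {x | |f x| ∈ Set.Ioi (n : ℝ)} := fun n =>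
    (hT.iterate n).measure_preimage (hf.abs.aemeasurable.nullMeasurable measurableSet_Ioi)
  rw [← tsum_congr hiterate] at hsum
  filter_upwards [ae_eventually_notMem hsum.ne] with x hx
  simpa using hx

lemma MeasureTheory.MeasurePreserving.ae_tendsto_comp_iterate_div_natCast
    (hT : MeasurePreserving T μ μ) {g : X → ℝ} (hg : Integrable g μ) :
    ∀ᵐ x ∂μ, Tendsto (fun n : ℕ => g (T^[n] x) / n) atTop (𝓝 0) := by
  have hbound (k : ℕ) : ∀ᵐ x ∂μ, ∀ᶠ n : ℕ in atTop, |(k + 1 : ℝ) * g (T^[n] x)| ≤ n :=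
    hT.ae_eventually_abs_comp_iterate_le (hg.const_mul _)
  filter_upwards [ae_all_iff.2 hbound] with x hx
  refine tendsto_div_natCast_of_eventually_mul_abs_le fun k => (hx k).mono fun n hn => ?_
  rwa [abs_mul, abs_of_pos (by positivity : (0 : ℝ) < k + 1)] at hn

end MeasurePreserving

/-- **Gapped Avila–Bochi lemma.**  If `T` preserves the probability measure `μ`,
`g ∈ L¹(dμ)`, and `(σ_n)` is a sequence of nonnegative integers with `σ_n/n → 0`,
then for μ-almost every `x`, `g(T^{n+σ_n} x)/n → 0` as `n → ∞`. -/
theorem gapped_birkhoff_sublinear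
    {X : Type*} [MeasurableSpace X] (μ : Measure X) [IsProbabilityMeasure μ]
    (T : X → X) (hT : MeasurePreserving T μ μ)
    (g : X → ℝ) (hg : Integrable g μ)
    (σ : ℕ → ℕ)
    (hσ : Filter.Tendsto (fun n => (σ n : ℝ) / n) Filter.atTop (𝓝 0)) :
    ∀ᵐ x ∂μ, Filter.Tendsto (fun n : ℕ => g (T^[n + σ n] x) / n)
      Filter.atTop (𝓝 0) := by
  filter_upwards [hT.ae_tendsto_comp_iterate_div_natCast hg] with x hx
  exact tendsto_comp_add_div_natCast (u := fun n => g (T^[n] x)) hx hσ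
end

section
/- Assume the hypotheses of the gapped almost subadditive ergodic theorem: (X, 𝓕, μ, T) a measure-preserving dynamical system with μ a probability measure; (f_n)_{n∈ℕ} measurable real-valued functions with positive parts f_{n,+} ∈ L¹(dμ); (σ_n)_{n∈ℕ} nonnegative integers with σ_1 = 0 and σ_n/n → 0; (ρ_n)_{n∈ℕ} nonnegative L¹(dμ) functions with f_{n+σ_n+m} ≤ f_n + ρ_n + f_m ∘ T^{n+σ_n} μ-a.s. for all n, m ∈ ℕ and ρ_n/n → 0 μ-a.s. Let f(x) := liminf_{n→∞} f_n(x)/n (valued in [-∞, ∞)). Then for every ε > 0 there exists r₀ ∈ ℕ (depending only on ε and the sequence (σ_n)) such that for every r ≥ r₀, for μ-almost every x there exist infinitely many k ∈ ℕ with (f_{kr}(x) + ρ_{kr}(x))/(kr + σ_{kr}) ≤ max{f(x), -ε⁻¹} + ε. -/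
open Filter Topology MeasureTheory
open scoped ENNReal

/-! Fix `r ≥ 1` and a point `x` with `t := max (f x) (-ε⁻¹)` finite. Infinitely often
`f_n(x) ≤ (t + ε/2) n`; for such `n` let `k r` be the first multiple of `r` beyond
`n + σ_n`, so that `k r = n + σ_n + m` with `1 ≤ m ≤ r`. The gapped subadditivity gives
`f_{kr}(x) ≤ f_n(x) + ρ_n(x) + f_m(T^{n+σ_n} x)`, and every error term is `o(n)`: `σ_n` and
`ρ_n` by hypothesis, and `f_m ∘ T^N ≤ G ∘ T^N` with `G = ∑_{m ≤ r} f_{m,+}` integrable, which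
is `o(N)` almost surely by Borel–Cantelli since `T` preserves `μ`. In particular every
`r ≥ 1` works. -/

theorem ae_eventually_comp_iterate_le_mul {X : Type*} [MeasurableSpace X] {μ : Measure X}
    [IsProbabilityMeasure μ] {T : X → X} (hT : MeasurePreserving T μ μ) {g : X → ℝ}
    (hg : Integrable g μ) {c : ℝ} (hc : 0 < c) :
    ∀ᵐ x ∂μ, ∀ᶠ N : ℕ in atTop, g (T^[N] x) ≤ c * N := by
  set A : ℕ → Set X := fun N => {y | |g y| / c ∈ Set.Ioi (N : ℝ)}
  have hA : (∑' N, μ (T^[N] ⁻¹' A N)) ≠ ∞ := by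
    let : MeasureSpace X := ⟨μ⟩
    have hmeas : ∀ N, NullMeasurableSet (A N) μ := fun N =>
      nullMeasurableSet_lt aemeasurable_const (hg.abs.div_const c).aemeasurable
    simp_rw [fun N => (hT.iterate N).measure_preimage (hmeas N)]
    exact (ProbabilityTheory.tsum_prob_mem_Ioi_lt_top (hg.abs.div_const c)
      fun y => by positivity).ne
  filter_upwards [ae_eventually_notMem hA] with x hx
  filter_upwards [hx] with N hN
  have hle : |g (T^[N] x)| ≤ c * N := by
    rw [mul_comm, ← div_le_iff₀ hc]
    exact not_lt.1 hN
  exact (le_abs_self _).trans hle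

theorem frequently_le_mul_of_liminf_div_lt {a : ℕ → ℝ} {s : ℝ}
    (h : liminf (fun n : ℕ => (a n : EReal) / (n : EReal)) atTop < s) :
    ∃ᶠ n in atTop, a n ≤ s * n := by
  refine ((frequently_lt_of_liminf_lt (by isBoundedDefault) h).and_eventually
    (eventually_gt_atTop 0)).mono ?_
  rintro n ⟨hlt, hn⟩
  rw [← EReal.coe_coe_eq_natCast, ← EReal.coe_div, EReal.coe_lt_coe_iff,
    div_lt_iff₀ (by exact_mod_cast hn)] at hlt
  exact hlt.le

theorem eventually_le_mul_of_tendsto_div_zero {a : ℕ → ℝ}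
    (ha : Tendsto (fun n => a n / n) atTop (𝓝 0)) {δ : ℝ} (hδ : 0 < δ) :
    ∀ᶠ n : ℕ in atTop, a n ≤ δ * n := by
  filter_upwards [ha.eventually_lt_const hδ, eventually_gt_atTop 0] with n h hn
  exact ((div_lt_iff₀ (by exact_mod_cast hn)).1 h).le

section GappedStep

variable {F R E : ℕ → ℝ} {σ : ℕ → ℕ} {s δ : ℝ}

theorem add_le_mul_of_gapped_step {n m r : ℕ} (hδ : 0 ≤ δ) (hmr : m ≤ r)
    (hstep : F (n + σ n + m) ≤ F n + R n + E (n + σ n)) (hFn : F n ≤ s * n)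
    (hsr : |s| * r ≤ δ * n)
    (herr : ∀ j, n ≤ j → |s| * σ j ≤ δ * j ∧ R j ≤ δ * j ∧ E j ≤ δ * j) :
    F (n + σ n + m) + R (n + σ n + m)
      ≤ (s + 6 * δ) * ((n + σ n + m + σ (n + σ n + m) : ℕ) : ℝ) := by
  set D := n + σ n + m with hD
  obtain ⟨hσn, hRn, -⟩ := herr n le_rfl
  obtain ⟨-, -, hEN⟩ := herr (n + σ n) (Nat.le_add_right _ _)
  obtain ⟨hσD, hRD, -⟩ := herr D (by omega)
  have hDcast : (D : ℝ) = n + σ n + m := by push_cast [hD]; ring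
  have hmr' : (m : ℝ) ≤ r := by exact_mod_cast hmr
  -- `s n` differs from `s (D + σ_D)` by `s (σ_n + m + σ_D)`, at most `|s| (σ_n + r + σ_D)`.
  have hgap : -(s * (σ n + m + σ D)) ≤ |s| * σ n + |s| * r + |s| * σ D := by
    have h1 := mul_le_mul_of_nonneg_right (neg_abs_le s)
      (by positivity : (0 : ℝ) ≤ σ n + m + σ D)
    linarith [mul_le_mul_of_nonneg_left hmr' (abs_nonneg s)]
  have hsplit : s * (D + σ D) = s * n + s * (σ n + m + σ D) := by rw [hDcast]; ring
  have hN : ((n + σ n : ℕ) : ℝ) ≤ D + σ D := by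
    push_cast; linarith [Nat.cast_nonneg (α := ℝ) (σ D), Nat.cast_nonneg (α := ℝ) m]
  have hn_le : (n : ℝ) ≤ D + σ D := by
    refine le_trans ?_ hN; push_cast; linarith [Nat.cast_nonneg (α := ℝ) (σ n)]
  have hD_le : (D : ℝ) ≤ D + σ D := by linarith [Nat.cast_nonneg (α := ℝ) (σ D)]
  push_cast
  linarith [mul_le_mul_of_nonneg_left hN hδ, mul_le_mul_of_nonneg_left hn_le hδ,
    mul_le_mul_of_nonneg_left hD_le hδ]

theorem frequently_add_le_mul_along_multiples {r : ℕ} (hr : 0 < r) (hδ : 0 ≤ δ)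
    (hsub : ∀ n m, 1 ≤ n → 1 ≤ m → m ≤ r → F (n + σ n + m) ≤ F n + R n + E (n + σ n))
    (hF : ∃ᶠ n in atTop, F n ≤ s * n)
    (herr : ∀ᶠ j in atTop, |s| * σ j ≤ δ * j ∧ R j ≤ δ * j ∧ E j ≤ δ * j)
    (hsr : ∀ᶠ n : ℕ in atTop, |s| * r ≤ δ * n) :
    ∃ᶠ k in atTop, F (k * r) + R (k * r) ≤ (s + 6 * δ) * ((k * r + σ (k * r) : ℕ) : ℝ) := by
  obtain ⟨j₀, hj₀⟩ := eventually_atTop.1 herr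
  rw [frequently_atTop]
  intro b
  obtain ⟨n, hFn, hsrn, hn⟩ :=
    (hF.and_eventually (hsr.and (eventually_ge_atTop (b * r + j₀ + 1)))).exists
  set k := (n + σ n) / r + 1
  have hlt : n + σ n < k * r := (Nat.div_lt_iff_lt_mul hr).1 (Nat.lt_succ_self _)
  have hle : k * r ≤ n + σ n + r := by
    rw [add_mul, one_mul]; exact Nat.add_le_add_right (Nat.div_mul_le_self _ _) r
  have hkr : k * r = n + σ n + (k * r - (n + σ n)) := by omega
  refine ⟨k, ?_, ?_⟩
  · exact Nat.le_of_mul_le_mul_right (by omega) hr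
  · rw [hkr]
    exact add_le_mul_of_gapped_step hδ (by omega) (hsub n _ (by omega) (by omega) (by omega)) hFn
      hsrn fun j hj => hj₀ j (by omega)

end GappedStep

theorem frequently_div_le_max_liminf_add {F R E : ℕ → ℝ} {σ : ℕ → ℕ} {r : ℕ} (hr : 0 < r)
    {ε : ℝ} (hε : 0 < ε)
    (hsub : ∀ n m, 1 ≤ n → 1 ≤ m → m ≤ r → F (n + σ n + m) ≤ F n + R n + E (n + σ n))
    (hσ : Tendsto (fun n => (σ n : ℝ) / n) atTop (𝓝 0))
    (hR : Tendsto (fun n => R n / n) atTop (𝓝 0))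
    (hE : ∀ᶠ N : ℕ in atTop, E N ≤ ε / 12 * N) :
    ∃ᶠ k in atTop, 1 ≤ k ∧
      (((F (k * r) + R (k * r)) / (k * r + σ (k * r) : ℕ) : ℝ) : EReal)
        ≤ max (liminf (fun n : ℕ => ((F n : EReal) / (n : EReal))) atTop) ((-ε⁻¹ : ℝ) : EReal)
          + (ε : EReal) := by
  set M := max (liminf (fun n : ℕ => ((F n : EReal) / (n : EReal))) atTop) ((-ε⁻¹ : ℝ) : EReal)
  rcases eq_top_or_lt_top M with hM | hM
  · exact (eventually_ge_atTop 1).frequently.mono fun k hk => ⟨hk, by simp [hM]⟩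
  obtain ⟨t, ht⟩ : ∃ t : ℝ, M = t :=
    ⟨M.toReal, (EReal.coe_toReal hM.ne ((EReal.bot_lt_coe _).trans_le (le_max_right _ _)).ne').symm⟩
  -- with `δ = ε / 12` below, `s + 6 δ = t + ε`
  set s := t + ε / 2 with hs
  have hMs : M < s := by
    rw [ht, EReal.coe_lt_coe_iff]
    linarith
  have hF : ∃ᶠ n in atTop, F n ≤ s * n :=
    frequently_le_mul_of_liminf_div_lt ((le_max_left _ _).trans_lt hMs)
  have herr : ∀ᶠ j in atTop, |s| * σ j ≤ ε / 12 * j ∧ R j ≤ ε / 12 * j ∧ E j ≤ ε / 12 * j :=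
    (eventually_le_mul_of_tendsto_div_zero (by simpa [mul_div_assoc] using hσ.const_mul |s|)
      (by positivity)).and ((eventually_le_mul_of_tendsto_div_zero hR (by positivity)).and hE)
  have hsr : ∀ᶠ n : ℕ in atTop, |s| * r ≤ ε / 12 * n :=
    eventually_le_mul_of_tendsto_div_zero (tendsto_const_div_atTop_nhds_zero_nat _) (by positivity)
  refine ((frequently_add_le_mul_along_multiples hr (by positivity) hsub hF herr hsr
    ).and_eventually (eventually_ge_atTop 1)).mono ?_
  rintro k ⟨hk, hk1⟩
  refine ⟨hk1, ?_⟩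
  rw [ht, ← EReal.coe_add, EReal.coe_le_coe_iff,
    div_le_iff₀ (Nat.cast_pos.2 (Nat.add_pos_left (Nat.mul_pos hk1 hr) _))]
  exact hk.trans_eq (by rw [hs]; ring)

theorem gapped_subadditive_step2_general
    {X : Type*} [MeasurableSpace X] (μ : Measure X) [IsProbabilityMeasure μ]
    (T : X → X) (hT : MeasurePreserving T μ μ)
    (f : ℕ → X → ℝ)
    (hf_int : ∀ n, 1 ≤ n → Integrable (fun x => max (f n x) 0) μ)
    (σ : ℕ → ℕ)
    (hσ : Filter.Tendsto (fun n => (σ n : ℝ) / n) Filter.atTop (𝓝 0))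
    (ρ : ℕ → X → ℝ)
    (hsub : ∀ n m, 1 ≤ n → 1 ≤ m → ∀ᵐ x ∂μ,
      f (n + σ n + m) x ≤ f n x + ρ n x + f m (T^[n + σ n] x))
    (hρ0 : ∀ᵐ x ∂μ, Filter.Tendsto (fun n => ρ n x / n) Filter.atTop (𝓝 0)) :
    ∀ ε : ℝ, 0 < ε → ∃ r₀ : ℕ, 1 ≤ r₀ ∧ ∀ r : ℕ, r₀ ≤ r →
      ∀ᵐ x ∂μ, ∃ᶠ k in Filter.atTop, 1 ≤ k ∧
        (((f (k * r) x + ρ (k * r) x) / (k * r + σ (k * r) : ℕ) : ℝ) : EReal)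
          ≤ max (Filter.liminf (fun n : ℕ => ((f n x : EReal) / (n : EReal))) Filter.atTop)
              ((-ε⁻¹ : ℝ) : EReal) + (ε : EReal) := by
  intro ε hε
  refine ⟨1, le_rfl, fun r hr => ?_⟩
  set G : X → ℝ := fun y => ∑ m ∈ Finset.Icc 1 r, max (f m y) 0
  have hG : Integrable G μ :=
    integrable_finsetSum _ fun m hm => hf_int m (Finset.mem_Icc.1 hm).1
  have hfG : ∀ m ∈ Finset.Icc 1 r, ∀ y, f m y ≤ G y := fun m hm y =>
    (le_max_left _ _).trans (Finset.single_le_sum (fun i _ => le_max_right (f i y) 0) hm)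
  have hsub_all : ∀ᵐ x ∂μ, ∀ n m, 1 ≤ n → 1 ≤ m →
      f (n + σ n + m) x ≤ f n x + ρ n x + f m (T^[n + σ n] x) := by
    simpa only [ae_all_iff, eventually_imp_distrib_left] using hsub
  filter_upwards [hsub_all, hρ0, ae_eventually_comp_iterate_le_mul hT hG (c := ε / 12)
    (by positivity)] with x hsub_x hρ_x hG_x
  refine frequently_div_le_max_liminf_add (F := fun n => f n x) hr hε
    (fun n m hn hm hmr => ?_) hσ hρ_x hG_x
  linarith [hsub_x n m hn hm, hfG m (Finset.mem_Icc.2 ⟨hm, hmr⟩) (T^[n + σ n] x)]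

/-- **Step 2 of the gapped almost subadditive ergodic theorem.**  Under the hypotheses
of the gapped almost subadditive ergodic theorem, with `f(x) = liminf_n f_n(x)/n`, for
every `ε > 0` there is `r₀` such that for all `r ≥ r₀`, μ-a.s. there are infinitely many
`k` with `(f_{kr}(x) + ρ_{kr}(x))/(kr + σ_{kr}) ≤ max{f(x), -ε⁻¹} + ε`. -/
theorem gapped_subadditive_step2
    {X : Type*} [MeasurableSpace X] (μ : Measure X) [IsProbabilityMeasure μ]
    (T : X → X) (hT : MeasurePreserving T μ μ)
    (f : ℕ → X → ℝ) (hf_meas : ∀ n, 1 ≤ n → Measurable (f n))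
    (hf_int : ∀ n, 1 ≤ n → Integrable (fun x => max (f n x) 0) μ)
    (σ : ℕ → ℕ) (hσ1 : σ 1 = 0)
    (hσ : Filter.Tendsto (fun n => (σ n : ℝ) / n) Filter.atTop (𝓝 0))
    (ρ : ℕ → X → ℝ) (hρ_nonneg : ∀ n, 1 ≤ n → ∀ x, 0 ≤ ρ n x)
    (hρ_int : ∀ n, 1 ≤ n → Integrable (ρ n) μ)
    (hsub : ∀ n m, 1 ≤ n → 1 ≤ m → ∀ᵐ x ∂μ,
      f (n + σ n + m) x ≤ f n x + ρ n x + f m (T^[n + σ n] x))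
    (hρ0 : ∀ᵐ x ∂μ, Filter.Tendsto (fun n => ρ n x / n) Filter.atTop (𝓝 0)) :
    ∀ ε : ℝ, 0 < ε → ∃ r₀ : ℕ, 1 ≤ r₀ ∧ ∀ r : ℕ, r₀ ≤ r →
      ∀ᵐ x ∂μ, ∃ᶠ k in Filter.atTop, 1 ≤ k ∧
        (((f (k * r) x + ρ (k * r) x) / (k * r + σ (k * r) : ℕ) : ℝ) : EReal)
          ≤ max (Filter.liminf (fun n : ℕ => ((f n x : EReal) / (n : EReal))) Filter.atTop)
              ((-ε⁻¹ : ℝ) : EReal) + (ε : EReal) :=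
  gapped_subadditive_step2_general μ T hT f hf_int σ hσ ρ hsub hρ0
end

section
/- Assume the hypotheses of the L¹ gapped almost subadditive ergodic theorem: (X, 𝓕, μ, T) a measure-preserving dynamical system with μ a probability measure; (f_n)_{n∈ℕ} measurable real-valued functions with positive parts f_{n,+} ∈ L¹(dμ); (σ_n)_{n∈ℕ} nonnegative integers with σ_1 = 0 and σ_n/n → 0; (ρ_n)_{n∈ℕ} nonnegative L¹(dμ) functions with f_{n+σ_n+m} ≤ f_n + ρ_n + f_m ∘ T^{n+σ_n} μ-a.s. for all n, m ∈ ℕ, ρ_n/n → 0 μ-a.s., and (1/n)∫ρ_n dμ → 0. Then the limit lim_{n→∞} (1/n)∫ f_n dμ exists in [-∞, ∞) and satisfies lim_{n→∞} (1/n)∫ f_n dμ = lim_{ε→0⁺} lim_{n→∞} (1/n) ∫ max{f_n, -n ε⁻¹} dμ, where for each ε > 0 the inner limit over n exists in [-∞, ∞). -/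
/-!
Write `a_n = ∫ f_n` and `b^ε_n = ∫ max{f_n, -n/ε}`, integrals in `[-∞, ∞)`. Since `T` preserves `μ`,
both sequences are gapped subadditive: `a_{n+σ_n+m} ≤ a_n + ∫ρ_n + a_m`, and the same for `b^ε`
because `ρ_n ≥ 0` and the truncation levels satisfy `-(n+σ_n+m)/ε ≤ -n/ε - m/ε`. A gapped Fekete
lemma in `[-∞, ∞)` gives `a_n / n → inf_n (a_n + ∫ρ_n) / (n + σ_n)`, and likewise for `b^ε`.
As `ε → 0⁺`, monotone convergence of the negative parts gives `b^ε_n → a_n` for each `n`; since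
also `b^ε_n ≥ a_n`, the infimum for `b^ε` converges to the infimum for `a`.
-/

open Filter Topology MeasureTheory

/-- The integral of a real-valued function, well defined in `[-∞, ∞)` whenever its
positive part is integrable: it is the difference of the lower integrals of the
positive and negative parts. -/
noncomputable def erealIntegralReal {X : Type*} [MeasurableSpace X]
    (μ : Measure X) (g : X → ℝ) : EReal :=
  ((∫⁻ x, ENNReal.ofReal (g x) ∂μ : ENNReal) : EReal)
    - ((∫⁻ x, ENNReal.ofReal (-(g x)) ∂μ : ENNReal) : EReal)

lemma max_neg_mul_le_add {F a p b t : ℝ} {n k m : ℕ} (ht : 0 ≤ t) (hp : 0 ≤ p)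
    (hF : F ≤ a + p + b) :
    max F (-((n + k + m : ℕ) : ℝ) * t) ≤ max a (-(n : ℝ) * t) + p + max b (-(m : ℝ) * t) := by
  have hk : 0 ≤ (k : ℝ) * t := by positivity
  push_cast
  refine max_le ?_ ?_ <;>
    linarith [le_max_left a (-(n : ℝ) * t), le_max_right a (-(n : ℝ) * t),
      le_max_left b (-(m : ℝ) * t), le_max_right b (-(m : ℝ) * t)]

section ErealIntegral

variable {X : Type*} [MeasurableSpace X] {μ : Measure X} {g u v : X → ℝ}

lemma lintegral_ofReal_ne_top_of_integrable_max_zero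
    (hg : Integrable (fun x => max (g x) 0) μ) : ∫⁻ x, ENNReal.ofReal (g x) ∂μ ≠ ⊤ := by
  simpa [ENNReal.ofReal_max] using hg.lintegral_lt_top.ne

lemma MeasureTheory.Integrable.max_zero_add (hu : AEStronglyMeasurable u μ)
    (hv : AEStronglyMeasurable v μ) (hu' : Integrable (fun x => max (u x) 0) μ)
    (hv' : Integrable (fun x => max (v x) 0) μ) :
    Integrable (fun x => max (u x + v x) 0) μ :=
  (hu'.add hv').mono' ((hu.add hv).aemeasurable.max aemeasurable_const).aestronglyMeasurable
    (ae_of_all _ fun x => by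
      rw [Real.norm_of_nonneg (le_max_right _ _)]
      exact max_le (add_le_add (le_max_left _ _) (le_max_left _ _))
        (add_nonneg (le_max_right _ _) (le_max_right _ _)))

lemma MeasureTheory.Integrable.of_add_left (huv : Integrable (fun x => u x + v x) μ)
    (hu : AEStronglyMeasurable u μ) (hu' : Integrable (fun x => max (u x) 0) μ)
    (hv' : Integrable (fun x => max (v x) 0) μ) : Integrable u μ :=
  (huv.abs.add (hu'.add hv')).mono' hu (ae_of_all _ fun x => by
    simp only [Real.norm_eq_abs, Pi.add_apply]
    rcases abs_cases (u x) with ⟨h, _⟩ | ⟨h, _⟩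
    · linarith [abs_nonneg (u x + v x), le_max_left (u x) 0, le_max_right (v x) 0]
    · linarith [neg_abs_le (u x + v x), le_max_left (v x) 0, le_max_right (u x) 0])

lemma MeasureTheory.Integrable.max_max_zero (hg : Integrable (fun x => max (g x) 0) μ) {c : ℝ}
    (hc : c ≤ 0) : Integrable (fun x => max (max (g x) c) 0) μ := by
  simpa only [max_assoc, max_eq_right hc] using hg

lemma erealIntegralReal_mono (h : ∀ᵐ x ∂μ, g x ≤ v x) :
    erealIntegralReal μ g ≤ erealIntegralReal μ v :=
  EReal.sub_le_sub
    (by exact_mod_cast lintegral_mono_ae (h.mono fun x hx => ENNReal.ofReal_le_ofReal hx))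
    (by exact_mod_cast lintegral_mono_ae <|
      h.mono fun x hx => ENNReal.ofReal_le_ofReal (neg_le_neg hx))

lemma erealIntegralReal_ne_top (hg : Integrable (fun x => max (g x) 0) μ) :
    erealIntegralReal μ g ≠ ⊤ := by
  have hP := lintegral_ofReal_ne_top_of_integrable_max_zero hg
  refine ne_top_of_le_ne_top (EReal.coe_ennreal_eq_top_iff.not.2 hP) ?_
  exact (EReal.sub_le_sub le_rfl (EReal.coe_ennreal_nonneg _)).trans_eq (sub_zero _)

lemma erealIntegralReal_eq_integral (hg : Integrable g μ) :
    erealIntegralReal μ g = ((∫ x, g x ∂μ : ℝ) : EReal) := by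
  rw [integral_eq_lintegral_pos_part_sub_lintegral_neg_part hg, EReal.coe_sub,
    EReal.coe_ennreal_toReal hg.lintegral_lt_top.ne,
    EReal.coe_ennreal_toReal (by simpa using hg.neg.lintegral_lt_top.ne)]
  rfl

lemma erealIntegralReal_eq_bot (hg : AEStronglyMeasurable g μ)
    (hg' : Integrable (fun x => max (g x) 0) μ) (hni : ¬Integrable g μ) :
    erealIntegralReal μ g = ⊥ := by
  have hN : ∫⁻ x, ENNReal.ofReal (-g x) ∂μ = ⊤ := by
    by_contra hN
    have hneg : Integrable (fun x => max (-g x) 0) μ := by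
      simpa only [Function.comp_apply, Pi.neg_apply, ENNReal.toReal_ofReal'] using
        integrable_toReal_of_lintegral_ne_top
          (ENNReal.measurable_ofReal.comp_aemeasurable hg.aemeasurable.neg) hN
    exact hni ((hg'.sub hneg).congr (ae_of_all _ fun x => max_zero_sub_eq_self (g x)))
  rw [erealIntegralReal, hN, EReal.coe_ennreal_top, EReal.sub_top]

lemma erealIntegralReal_add_le (hu : AEStronglyMeasurable u μ) (hv : AEStronglyMeasurable v μ)
    (hu' : Integrable (fun x => max (u x) 0) μ) (hv' : Integrable (fun x => max (v x) 0) μ) :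
    erealIntegralReal μ (fun x => u x + v x) ≤ erealIntegralReal μ u + erealIntegralReal μ v := by
  by_cases huv : Integrable (fun x => u x + v x) μ
  · have hvu : Integrable (fun x => v x + u x) μ := by simpa only [add_comm] using huv
    have hu_int := huv.of_add_left hu hu' hv'
    have hv_int := hvu.of_add_left hv hv' hu'
    rw [erealIntegralReal_eq_integral huv, erealIntegralReal_eq_integral hu_int,
      erealIntegralReal_eq_integral hv_int, integral_add hu_int hv_int, EReal.coe_add]
  · rw [erealIntegralReal_eq_bot (g := fun x => u x + v x) (hu.add hv)
      (Integrable.max_zero_add hu hv hu' hv') huv]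
    exact bot_le

lemma erealIntegralReal_comp {Y : Type*} [MeasurableSpace Y] {ν : Measure Y} {S : X → Y}
    (hS : MeasurePreserving S μ ν) {w : Y → ℝ} (hw : Measurable w) :
    erealIntegralReal μ (fun x => w (S x)) = erealIntegralReal ν w := by
  rw [erealIntegralReal, erealIntegralReal,
    hS.lintegral_comp (f := fun y => ENNReal.ofReal (w y)) (ENNReal.measurable_ofReal.comp hw),
    hS.lintegral_comp (f := fun y => ENNReal.ofReal (-w y)) (ENNReal.measurable_ofReal.comp hw.neg)]

lemma tendsto_lintegral_ofReal_min_atTop (hg : AEMeasurable g μ) :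
    Tendsto (fun c : ℝ => ∫⁻ x, ENNReal.ofReal (min (g x) c) ∂μ) atTop
      (𝓝 (∫⁻ x, ENNReal.ofReal (g x) ∂μ)) := by
  have hmono : Monotone fun c : ℝ => ∫⁻ x, ENNReal.ofReal (min (g x) c) ∂μ :=
    fun c d hcd => lintegral_mono fun x => ENNReal.ofReal_le_ofReal (min_le_min_left _ hcd)
  have hnat : Tendsto (fun n : ℕ => ∫⁻ x, ENNReal.ofReal (min (g x) n) ∂μ) atTop
      (𝓝 (∫⁻ x, ENNReal.ofReal (g x) ∂μ)) :=
    lintegral_tendsto_of_tendsto_of_monotone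
      (fun n => ENNReal.measurable_ofReal.comp_aemeasurable (hg.min aemeasurable_const))
      (ae_of_all _ fun x n m hnm =>
        ENNReal.ofReal_le_ofReal (min_le_min_left _ (Nat.cast_le.2 hnm)))
      (ae_of_all _ fun x => tendsto_const_nhds.congr' <|
        (tendsto_natCast_atTop_atTop.eventually_ge_atTop (g x)).mono fun n hn =>
          congrArg ENNReal.ofReal (min_eq_left hn).symm)
  have hsup := tendsto_atTop_iSup hmono
  rwa [tendsto_nhds_unique (hsup.comp tendsto_natCast_atTop_atTop) hnat] at hsup

/-- Monotone convergence for the negative parts, with the positive part left unchanged. -/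
lemma tendsto_erealIntegralReal_max_neg_atTop (hg : AEMeasurable g μ)
    (hg' : Integrable (fun x => max (g x) 0) μ) :
    Tendsto (fun c : ℝ => erealIntegralReal μ (fun x => max (g x) (-c))) atTop
      (𝓝 (erealIntegralReal μ g)) := by
  set P : EReal := ((∫⁻ x, ENNReal.ofReal (g x) ∂μ : ENNReal) : EReal)
  set N : EReal := ((∫⁻ x, ENNReal.ofReal (-g x) ∂μ : ENNReal) : EReal)
  have hP : P ≠ ⊤ :=
    EReal.coe_ennreal_eq_top_iff.not.2 (lintegral_ofReal_ne_top_of_integrable_max_zero hg')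
  have hN := (continuous_coe_ennreal_ereal.tendsto _).comp
    (tendsto_lintegral_ofReal_min_atTop hg.neg)
  have hsub : Tendsto (fun p : EReal × EReal => p.1 + p.2) (𝓝 (P, -N)) (𝓝 (P + -N)) :=
    EReal.continuousAt_add (Or.inl hP) (Or.inl (EReal.coe_ennreal_ne_bot _))
  refine (hsub.comp (tendsto_const_nhds.prodMk_nhds hN.neg)).congr' ?_
  filter_upwards [eventually_ge_atTop 0] with c hc
  have hpos : ∀ x, ENNReal.ofReal (max (g x) (-c)) = ENNReal.ofReal (g x) := fun x => by
    rw [ENNReal.ofReal_max, ENNReal.ofReal_of_nonpos (neg_nonpos.2 hc), max_eq_left (by positivity)]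
  have hneg : ∀ x, -max (g x) (-c) = min (-g x) c := fun x => by
    rw [← min_neg_neg, neg_neg]
  simp only [erealIntegralReal, hpos, hneg]
  rfl

lemma tendsto_erealIntegralReal_max_neg_mul_inv (hg : AEMeasurable g μ)
    (hg' : Integrable (fun x => max (g x) 0) μ) {t : ℝ} (ht : 0 < t) :
    Tendsto (fun ε : ℝ => erealIntegralReal μ (fun x => max (g x) (-t * ε⁻¹))) (𝓝[>] 0)
      (𝓝 (erealIntegralReal μ g)) := by
  simpa only [neg_mul, Function.comp_def] using
    (tendsto_erealIntegralReal_max_neg_atTop hg hg').comp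
      (tendsto_inv_nhdsGT_zero.const_mul_atTop ht)

lemma erealIntegralReal_le_add_add_comp {Y : Type*} [MeasurableSpace Y] {ν : Measure Y}
    {S : X → Y} (hS : MeasurePreserving S μ ν) {ρ : X → ℝ} {w : Y → ℝ}
    (hu : AEStronglyMeasurable u μ) (hu' : Integrable (fun x => max (u x) 0) μ)
    (hρ : Integrable ρ μ) (hw : Measurable w) (hw' : Integrable (fun y => max (w y) 0) ν)
    (hle : ∀ᵐ x ∂μ, v x ≤ u x + ρ x + w (S x)) :
    erealIntegralReal μ v
      ≤ erealIntegralReal μ u + ((∫ x, ρ x ∂μ : ℝ) : EReal) + erealIntegralReal ν w := by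
  have hwS : AEStronglyMeasurable (fun x => w (S x)) μ :=
    (hw.comp hS.measurable).aestronglyMeasurable
  have hwS' : Integrable (fun x => max (w (S x)) 0) μ :=
    (hS.integrable_comp hw'.aestronglyMeasurable).2 hw'
  calc erealIntegralReal μ v
      ≤ erealIntegralReal μ (fun x => u x + (ρ x + w (S x))) :=
        erealIntegralReal_mono (hle.mono fun x hx => by linarith)
    _ ≤ erealIntegralReal μ u + erealIntegralReal μ (fun x => ρ x + w (S x)) :=
        erealIntegralReal_add_le hu (hρ.1.add hwS) hu'
          (Integrable.max_zero_add hρ.1 hwS hρ.pos_part hwS')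
    _ ≤ erealIntegralReal μ u + (erealIntegralReal μ ρ + erealIntegralReal μ (fun x => w (S x))) :=
        add_le_add le_rfl (erealIntegralReal_add_le hρ.1 hwS hρ.pos_part hwS')
    _ = _ := by rw [erealIntegralReal_eq_integral hρ, erealIntegralReal_comp hS hw, add_assoc]

lemma erealIntegralReal_gapped_subadditive {T : X → X} (hT : MeasurePreserving T μ μ)
    {σ : ℕ → ℕ} {F ρ : ℕ → X → ℝ} (hF_meas : ∀ n, 1 ≤ n → Measurable (F n))
    (hF_int : ∀ n, 1 ≤ n → Integrable (fun x => max (F n x) 0) μ)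
    (hρ_int : ∀ n, 1 ≤ n → Integrable (ρ n) μ)
    (hsub : ∀ n m, 1 ≤ n → 1 ≤ m → ∀ᵐ x ∂μ,
      F (n + σ n + m) x ≤ F n x + ρ n x + F m (T^[n + σ n] x))
    (n m : ℕ) (hn : 1 ≤ n) (hm : 1 ≤ m) :
    erealIntegralReal μ (F (n + σ n + m))
      ≤ erealIntegralReal μ (F n) + ((∫ x, ρ n x ∂μ : ℝ) : EReal) + erealIntegralReal μ (F m) :=
  erealIntegralReal_le_add_add_comp (hT.iterate _) (hF_meas n hn).aestronglyMeasurable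
    (hF_int n hn) (hρ_int n hn) (hF_meas m hm) (hF_int m hm) (hsub n m hn hm)

lemma ae_max_neg_mul_le_add {T : X → X} {σ : ℕ → ℕ} {F ρ : ℕ → X → ℝ} {t : ℝ} (ht : 0 ≤ t)
    (hρ : ∀ n, 1 ≤ n → ∀ x, 0 ≤ ρ n x)
    (hsub : ∀ n m, 1 ≤ n → 1 ≤ m → ∀ᵐ x ∂μ,
      F (n + σ n + m) x ≤ F n x + ρ n x + F m (T^[n + σ n] x))
    (n m : ℕ) (hn : 1 ≤ n) (hm : 1 ≤ m) :
    ∀ᵐ x ∂μ, max (F (n + σ n + m) x) (-((n + σ n + m : ℕ) : ℝ) * t)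
      ≤ max (F n x) (-(n : ℝ) * t) + ρ n x + max (F m (T^[n + σ n] x)) (-(m : ℝ) * t) :=
  (hsub n m hn hm).mono fun x hx => max_neg_mul_le_add ht (hρ n hn x) hx

end ErealIntegral

noncomputable def gappedFeketeInf (a : ℕ → EReal) (σ : ℕ → ℕ) (r : ℕ → ℝ) : EReal :=
  ⨅ k : ℕ, (a (k + 1) + r (k + 1)) / ((k + 1 + σ (k + 1) : ℕ) : EReal)

section RealFekete

variable {A : ℕ → ℝ} {σ : ℕ → ℕ} {r : ℕ → ℝ}

lemma le_mul_add_of_gapped_subadditive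
    (hsub : ∀ n m, 1 ≤ n → 1 ≤ m → A (n + σ n + m) ≤ A n + r n + A m)
    {n : ℕ} (hn : 1 ≤ n) (j : ℕ) {m : ℕ} (hm : 1 ≤ m) :
    A (j * (n + σ n) + m) ≤ j * (A n + r n) + A m := by
  induction j with
  | zero => simp
  | succ j ih =>
    have h := hsub n (j * (n + σ n) + m) hn (by omega)
    rw [show (j + 1) * (n + σ n) + m = n + σ n + (j * (n + σ n) + m) by ring]
    push_cast
    linarith

lemma exists_le_div_mul_add {k : ℕ} (hk : 1 ≤ k) {c : ℝ}
    (hstep : ∀ j m, 1 ≤ m → A (j * k + m) ≤ j * c + A m) :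
    ∃ C, ∀ N, 1 ≤ N → A N ≤ N / k * c + C := by
  obtain ⟨M, hM⟩ := (Finset.image A (Finset.Icc 1 k)).bddAbove
  refine ⟨|c| + M, fun N hN => ?_⟩
  obtain ⟨j, m, hm1, hmk, rfl⟩ : ∃ j m, 1 ≤ m ∧ m ≤ k ∧ N = j * k + m := by
    refine ⟨(N - 1) / k, (N - 1) % k + 1, by omega, ?_, ?_⟩
    · have := Nat.mod_lt (N - 1) (by omega : 0 < k); omega
    · have := Nat.div_add_mod (N - 1) k; rw [mul_comm]; omega
  have hAm : A m ≤ M := hM (Finset.mem_image_of_mem A (Finset.mem_Icc.2 ⟨hm1, hmk⟩))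
  have hk0 : (0 : ℝ) < k := by exact_mod_cast hk
  have hmk' : (m : ℝ) / k ≤ 1 := (div_le_one hk0).2 (by exact_mod_cast hmk)
  have h1 : 0 ≤ (m / k : ℝ) * (|c| + c) := mul_nonneg (by positivity) (by linarith [neg_abs_le c])
  have h2 : 0 ≤ (1 - m / k : ℝ) * |c| := mul_nonneg (by linarith) (abs_nonneg c)
  have h3 : ((j * k + m : ℕ) : ℝ) / k * c = j * c + m / k * c := by
    push_cast; field_simp
  rw [h3]
  linarith [hstep j m hm1]

lemma limsup_div_le_of_gapped_subadditive
    (hsub : ∀ n m, 1 ≤ n → 1 ≤ m → A (n + σ n + m) ≤ A n + r n + A m) {n : ℕ} (hn : 1 ≤ n) :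
    limsup (fun N : ℕ => ((A N / N : ℝ) : EReal)) atTop
      ≤ (((A n + r n) / (n + σ n : ℕ) : ℝ) : EReal) := by
  obtain ⟨C, hC⟩ := exists_le_div_mul_add (k := n + σ n) (by omega)
    (le_mul_add_of_gapped_subadditive hsub hn)
  set c := (A n + r n) / (n + σ n : ℕ)
  have hlim : Tendsto (fun N : ℕ => ((c + C / N : ℝ) : EReal)) atTop (𝓝 (c : EReal)) :=
    EReal.tendsto_coe.2 (by
      simpa using tendsto_const_nhds.add
        ((tendsto_const_nhds (x := C)).div_atTop tendsto_natCast_atTop_atTop))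
  refine (limsup_le_limsup ((eventually_ge_atTop 1).mono fun N hN => ?_)).trans_eq hlim.limsup_eq
  have hN0 : (0 : ℝ) < N := by exact_mod_cast hN
  refine EReal.coe_le_coe_iff.2 ((div_le_iff₀ hN0).2 ((hC N hN).trans_eq ?_))
  simp only [c]
  field_simp

lemma le_liminf_div (hσ : Tendsto (fun n : ℕ => (σ n : ℝ) / n) atTop (𝓝 0))
    (hr : Tendsto (fun n : ℕ => r n / n) atTop (𝓝 0)) {y : ℝ}
    (hy : ∀ N, 1 ≤ N → y * (N + σ N) ≤ A N + r N) :
    (y : EReal) ≤ liminf (fun N : ℕ => ((A N / N : ℝ) : EReal)) atTop := by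
  have hlim : Tendsto (fun N : ℕ => ((y * (1 + σ N / N) - r N / N : ℝ) : EReal)) atTop
      (𝓝 (y : EReal)) :=
    EReal.tendsto_coe.2 <| by
      simpa using (((tendsto_const_nhds (x := (1 : ℝ))).add hσ).const_mul y).sub hr
  refine hlim.liminf_eq.symm.trans_le
    (liminf_le_liminf ((eventually_ge_atTop 1).mono fun N hN => ?_))
  have hN0 : (0 : ℝ) < N := by exact_mod_cast hN
  have heq : y * (1 + σ N / N) - r N / N = (y * (N + σ N) - r N) / N := by field_simp
  rw [EReal.coe_le_coe_iff, heq]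
  exact div_le_div_of_nonneg_right (by linarith [hy N hN]) hN0.le

theorem tendsto_div_gappedFeketeInf_coe (hσ : Tendsto (fun n : ℕ => (σ n : ℝ) / n) atTop (𝓝 0))
    (hr : Tendsto (fun n : ℕ => r n / n) atTop (𝓝 0))
    (hsub : ∀ n m, 1 ≤ n → 1 ≤ m → A (n + σ n + m) ≤ A n + r n + A m) :
    Tendsto (fun N : ℕ => (A N : EReal) / N) atTop
      (𝓝 (gappedFeketeInf (fun n => (A n : EReal)) σ r)) := by
  have hI : gappedFeketeInf (fun n => (A n : EReal)) σ r
      = ⨅ k : ℕ, (((A (k + 1) + r (k + 1)) / (k + 1 + σ (k + 1) : ℕ) : ℝ) : EReal) :=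
    iInf_congr fun k => by rw [EReal.coe_div, EReal.coe_add]; rfl
  have hcoe : (fun N : ℕ => (A N : EReal) / N) = fun N => ((A N / N : ℝ) : EReal) :=
    funext fun N => (EReal.coe_div _ _).symm
  rw [hcoe, hI]
  refine tendsto_of_le_liminf_of_limsup_le ?_
    (le_iInf fun k => limsup_div_le_of_gapped_subadditive hsub (by omega))
  set I := ⨅ k : ℕ, (((A (k + 1) + r (k + 1)) / (k + 1 + σ (k + 1) : ℕ) : ℝ) : EReal)
  by_cases hbot : I = ⊥
  · rw [hbot]; exact bot_le
  have htop : I ≠ ⊤ := ne_top_of_le_ne_top (EReal.coe_ne_top _) (iInf_le _ 0)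
  rw [← EReal.coe_toReal htop hbot]
  refine le_liminf_div hσ hr fun N hN => ?_
  have h := (EReal.coe_toReal htop hbot).trans_le (iInf_le _ (N - 1))
  rw [Nat.sub_add_cancel hN, EReal.coe_le_coe_iff, le_div_iff₀ (by positivity)] at h
  exact_mod_cast h

end RealFekete

section GappedFekete

variable {a : ℕ → EReal} {σ : ℕ → ℕ} {r : ℕ → ℝ}

lemma EReal.div_natCast_lt_top {x : EReal} (hx : x ≠ ⊤) {K : ℕ} (hK : 0 < K) : x / K < ⊤ := by
  induction x with
  | bot =>
    rw [EReal.bot_div_of_pos_ne_top (by exact_mod_cast hK) (EReal.natCast_ne_top K)]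
    exact bot_lt_top
  | coe y => exact (EReal.coe_div y K) ▸ EReal.coe_lt_top _
  | top => exact absurd rfl hx

lemma gappedFeketeInf_lt_top (h : a 1 ≠ ⊤) : gappedFeketeInf a σ r < ⊤ :=
  (iInf_le _ 0).trans_lt
    (EReal.div_natCast_lt_top (EReal.add_lt_top h (EReal.coe_ne_top _)).ne (by omega))

theorem tendsto_div_gappedFeketeInf (ha : ∀ n, 1 ≤ n → a n ≠ ⊤)
    (hσ : Tendsto (fun n : ℕ => (σ n : ℝ) / n) atTop (𝓝 0))
    (hr : Tendsto (fun n : ℕ => r n / n) atTop (𝓝 0))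
    (hsub : ∀ n m, 1 ≤ n → 1 ≤ m → a (n + σ n + m) ≤ a n + r n + a m) :
    Tendsto (fun n : ℕ => a n / n) atTop (𝓝 (gappedFeketeInf a σ r)) := by
  by_cases hbot : ∃ n₀, 1 ≤ n₀ ∧ a n₀ = ⊥
  · obtain ⟨n₀, hn₀, h₀⟩ := hbot
    have hdiv : ∀ N : ℕ, 1 ≤ N → (⊥ : EReal) / N = ⊥ := fun N hN =>
      EReal.bot_div_of_pos_ne_top (by exact_mod_cast hN) (EReal.natCast_ne_top N)
    have hI : gappedFeketeInf a σ r = ⊥ := le_bot_iff.1 <| (iInf_le _ (n₀ - 1)).trans_eq <| by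
      rw [Nat.sub_add_cancel hn₀, h₀, EReal.bot_add, hdiv _ (by omega)]
    rw [hI]
    refine tendsto_const_nhds.congr' ((eventually_gt_atTop (n₀ + σ n₀)).mono fun N hN => ?_)
    have h := hsub n₀ (N - (n₀ + σ n₀)) hn₀ (by omega)
    rw [show n₀ + σ n₀ + (N - (n₀ + σ n₀)) = N by omega, h₀, EReal.bot_add, EReal.bot_add,
      le_bot_iff] at h
    show _ = a N / N
    rw [h, hdiv N (by omega)]
  · push Not at hbot
    set A : ℕ → ℝ := fun n => (a n).toReal
    have haA : ∀ n, 1 ≤ n → a n = A n := fun n hn =>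
      (EReal.coe_toReal (ha n hn) (hbot n hn)).symm
    have hI : gappedFeketeInf a σ r = gappedFeketeInf (fun n => (A n : EReal)) σ r :=
      iInf_congr fun k => by rw [haA (k + 1) (by omega)]
    rw [hI]
    refine (tendsto_div_gappedFeketeInf_coe hσ hr fun n m hn hm => ?_).congr'
      ((eventually_ge_atTop 1).mono fun N hN => by show _ = a N / N; rw [haA N hN])
    have h := hsub n m hn hm
    rw [haA n hn, haA m hm, haA _ (by omega)] at h
    exact_mod_cast h

lemma EReal.tendsto_add_coe_div_natCast {ι : Type*} {l : Filter ι} {u : ι → EReal} {x : EReal}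
    (hu : Tendsto u l (𝓝 x)) (c : ℝ) (K : ℕ) :
    Tendsto (fun i => (u i + c) / K) l (𝓝 ((x + c) / K)) := by
  have hadd : Tendsto (fun i => u i + c) l (𝓝 (x + c)) :=
    (EReal.continuousAt_add (p := (x, c)) (Or.inr (EReal.coe_ne_bot c))
      (Or.inr (EReal.coe_ne_top c))).tendsto.comp (hu.prodMk_nhds tendsto_const_nhds)
  simpa only [div_eq_mul_inv] using EReal.Tendsto.mul_const hadd
    (Or.inr (EReal.bot_lt_inv _).ne') (Or.inr (EReal.inv_lt_top _).ne)

theorem tendsto_gappedFeketeInf {ι : Type*} {l : Filter ι} [l.NeBot] {b : ι → ℕ → EReal}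
    (hle : ∀ i n, 1 ≤ n → a n ≤ b i n) (hb : ∀ n, 1 ≤ n → Tendsto (fun i => b i n) l (𝓝 (a n))) :
    Tendsto (fun i => gappedFeketeInf (b i) σ r) l (𝓝 (gappedFeketeInf a σ r)) := by
  refine tendsto_of_le_liminf_of_limsup_le (le_liminf_of_le (by isBoundedDefault)
    (Eventually.of_forall fun i => iInf_mono fun k => EReal.div_le_div_right_of_nonneg
      (by positivity) (add_le_add (hle i (k + 1) (by omega)) le_rfl))) ?_
  exact le_iInf fun k => (limsup_le_limsup (Eventually.of_forall fun i => iInf_le _ k)).trans_eq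
    (EReal.tendsto_add_coe_div_natCast (hb (k + 1) (by omega)) _ _).limsup_eq

end GappedFekete

theorem gapped_subadditive_L1_step1_general
    {X : Type*} [MeasurableSpace X] (μ : Measure X)
    (T : X → X) (hT : MeasurePreserving T μ μ)
    (f : ℕ → X → ℝ) (hf_meas : ∀ n, 1 ≤ n → Measurable (f n))
    (hf_int : ∀ n, 1 ≤ n → Integrable (fun x => max (f n x) 0) μ)
    (σ : ℕ → ℕ)
    (hσ : Filter.Tendsto (fun n => (σ n : ℝ) / n) Filter.atTop (𝓝 0))
    (ρ : ℕ → X → ℝ) (hρ_nonneg : ∀ n, 1 ≤ n → ∀ x, 0 ≤ ρ n x)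
    (hρ_int : ∀ n, 1 ≤ n → Integrable (ρ n) μ)
    (hsub : ∀ n m, 1 ≤ n → 1 ≤ m → ∀ᵐ x ∂μ,
      f (n + σ n + m) x ≤ f n x + ρ n x + f m (T^[n + σ n] x))
    (hρint0 : Filter.Tendsto (fun n : ℕ => (1 / (n : ℝ)) * ∫ x, ρ n x ∂μ)
      Filter.atTop (𝓝 0)) :
    ∃ L : EReal, L < ⊤ ∧
      Filter.Tendsto (fun n : ℕ => erealIntegralReal μ (f n) / (n : EReal))
        Filter.atTop (𝓝 L) ∧
      ∃ G : ℝ → EReal,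
        (∀ ε : ℝ, 0 < ε → G ε < ⊤ ∧
          Filter.Tendsto
            (fun n : ℕ =>
              erealIntegralReal μ (fun x => max (f n x) (-(n : ℝ) * ε⁻¹)) / (n : EReal))
            Filter.atTop (𝓝 (G ε))) ∧
        Filter.Tendsto G (nhdsWithin 0 (Set.Ioi 0)) (𝓝 L) := by
  set r : ℕ → ℝ := fun n => ∫ x, ρ n x ∂μ
  have hr : Tendsto (fun n : ℕ => r n / n) atTop (𝓝 0) :=
    hρint0.congr fun n => by rw [one_div, inv_mul_eq_div]
  have htrunc_int : ∀ ε : ℝ, 0 < ε → ∀ n, 1 ≤ n →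
      Integrable (fun x => max (max (f n x) (-(n : ℝ) * ε⁻¹)) 0) μ := fun ε hε n hn =>
    (hf_int n hn).max_max_zero (by rw [neg_mul]; exact neg_nonpos.2 (by positivity))
  refine ⟨gappedFeketeInf (fun n => erealIntegralReal μ (f n)) σ r, ?_, ?_,
    fun ε => gappedFeketeInf
      (fun n => erealIntegralReal μ (fun x => max (f n x) (-(n : ℝ) * ε⁻¹))) σ r,
    fun ε hε => ⟨?_, ?_⟩, ?_⟩
  · exact gappedFeketeInf_lt_top (erealIntegralReal_ne_top (hf_int 1 le_rfl))
  · exact tendsto_div_gappedFeketeInf (fun n hn => erealIntegralReal_ne_top (hf_int n hn)) hσ hr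
      (erealIntegralReal_gapped_subadditive hT hf_meas hf_int hρ_int hsub)
  · exact gappedFeketeInf_lt_top (erealIntegralReal_ne_top (htrunc_int ε hε 1 le_rfl))
  · exact tendsto_div_gappedFeketeInf (fun n hn => erealIntegralReal_ne_top (htrunc_int ε hε n hn))
      hσ hr (erealIntegralReal_gapped_subadditive hT
        (F := fun n x => max (f n x) (-(n : ℝ) * ε⁻¹))
        (fun n hn => (hf_meas n hn).max measurable_const) (htrunc_int ε hε) hρ_int
        (ae_max_neg_mul_le_add (inv_nonneg.2 hε.le) hρ_nonneg hsub))
  · exact tendsto_gappedFeketeInf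
      (fun ε n _ => erealIntegralReal_mono (ae_of_all _ fun x => le_max_left _ _))
      fun n hn => tendsto_erealIntegralReal_max_neg_mul_inv (hf_meas n hn).aemeasurable
        (hf_int n hn) (by exact_mod_cast hn)

/-- **Step 1 of the L¹ gapped almost subadditive ergodic theorem.**  Under the
hypotheses of the L¹ gapped almost subadditive ergodic theorem, the limit
`lim_n (1/n) ∫ f_n dμ` exists in `[-∞, ∞)` and equals
`lim_{ε→0⁺} lim_n (1/n) ∫ max{f_n, -nε⁻¹} dμ`, where for each `ε > 0` the inner limit
exists in `[-∞, ∞)`. -/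
theorem gapped_subadditive_L1_step1
    {X : Type*} [MeasurableSpace X] (μ : Measure X) [IsProbabilityMeasure μ]
    (T : X → X) (hT : MeasurePreserving T μ μ)
    (f : ℕ → X → ℝ) (hf_meas : ∀ n, 1 ≤ n → Measurable (f n))
    (hf_int : ∀ n, 1 ≤ n → Integrable (fun x => max (f n x) 0) μ)
    (σ : ℕ → ℕ) (hσ1 : σ 1 = 0)
    (hσ : Filter.Tendsto (fun n => (σ n : ℝ) / n) Filter.atTop (𝓝 0))
    (ρ : ℕ → X → ℝ) (hρ_nonneg : ∀ n, 1 ≤ n → ∀ x, 0 ≤ ρ n x)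
    (hρ_int : ∀ n, 1 ≤ n → Integrable (ρ n) μ)
    (hsub : ∀ n m, 1 ≤ n → 1 ≤ m → ∀ᵐ x ∂μ,
      f (n + σ n + m) x ≤ f n x + ρ n x + f m (T^[n + σ n] x))
    (hρ0 : ∀ᵐ x ∂μ, Filter.Tendsto (fun n => ρ n x / n) Filter.atTop (𝓝 0))
    (hρint0 : Filter.Tendsto (fun n : ℕ => (1 / (n : ℝ)) * ∫ x, ρ n x ∂μ)
      Filter.atTop (𝓝 0)) :
    ∃ L : EReal, L < ⊤ ∧
      Filter.Tendsto (fun n : ℕ => erealIntegralReal μ (f n) / (n : EReal))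
        Filter.atTop (𝓝 L) ∧
      ∃ G : ℝ → EReal,
        (∀ ε : ℝ, 0 < ε → G ε < ⊤ ∧
          Filter.Tendsto
            (fun n : ℕ =>
              erealIntegralReal μ (fun x => max (f n x) (-(n : ℝ) * ε⁻¹)) / (n : EReal))
            Filter.atTop (𝓝 (G ε))) ∧
        Filter.Tendsto G (nhdsWithin 0 (Set.Ioi 0)) (𝓝 L) :=
  gapped_subadditive_L1_step1_general μ T hT f hf_meas hf_int σ hσ ρ hρ_nonneg hρ_int hsub hρint0
end

section
/- Assume the hypotheses of the L¹ gapped almost subadditive ergodic theorem: (X, 𝓕, μ, T) a measure-preserving dynamical system with μ a probability measure; (f_n)_{n∈ℕ} measurable real-valued functions with positive parts f_{n,+} ∈ L¹(dμ); (σ_n)_{n∈ℕ} nonnegative integers with σ_1 = 0 and σ_n/n → 0; (ρ_n)_{n∈ℕ} nonnegative L¹(dμ) functions with f_{n+σ_n+m} ≤ f_n + ρ_n + f_m ∘ T^{n+σ_n} μ-a.s. for all n, m ∈ ℕ, ρ_n/n → 0 μ-a.s., and (1/n)∫ρ_n dμ → 0. Let f(x) := lim_{n→∞} f_n(x)/n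 (the μ-almost sure limit, valued in [-∞, ∞)). Then the positive part f_+ = max{f, 0} belongs to L¹(dμ), and lim_{n→∞} (1/n) ∫ f_{n,+} dμ = ∫ f_+ dμ. -/
/-!
Since `σ 1 = 0`, gapped subadditivity with `n = 1` reads `f (m + 1) ≤ f 1 + ρ 1 + f m ∘ T`, so
`(f n)₊ ≤ ∑_{k < n} h ∘ T^k` with `h = (f 1)₊ + ρ 1 ∈ L¹`. The functions `h ∘ T^k` are identically
distributed, hence uniformly integrable, and so are their averages; therefore `(f n)₊ / n` is
uniformly integrable. It converges a.e. to `f₊`, and Vitali's convergence theorem gives both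
`f₊ ∈ L¹` and the convergence of the integrals.
-/

open Filter Topology MeasureTheory

namespace MeasureTheory

variable {X : Type*} [MeasurableSpace X] {μ : Measure X}

theorem MeasurePreserving.identDistrib_comp {Y E : Type*} [MeasurableSpace Y] [MeasurableSpace E]
    {ν : Measure Y} {T : X → Y} (hT : MeasurePreserving T μ ν) {g : Y → E}
    (hg : AEMeasurable g ν) : ProbabilityTheory.IdentDistrib (g ∘ T) g μ ν where
  aemeasurable_fst := hg.comp_quasiMeasurePreserving hT.quasiMeasurePreserving
  aemeasurable_snd := hg
  map_eq := by
    rw [← AEMeasurable.map_map_of_aemeasurable (hT.map_eq ▸ hg) hT.aemeasurable, hT.map_eq]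

theorem MeasurePreserving.uniformIntegrable_birkhoffAverage {E : Type*} [NormedAddCommGroup E]
    [NormedSpace ℝ E] [MeasurableSpace E] [BorelSpace E] [IsFiniteMeasure μ] {T : X → X}
    (hT : MeasurePreserving T μ μ) {p : ENNReal} (hp : 1 ≤ p) (hp' : p ≠ ⊤) {g : X → E}
    (hg : MemLp g p μ) : UniformIntegrable (birkhoffAverage ℝ T g) p μ := by
  have hUI : UniformIntegrable (fun k => g ∘ T^[k]) p μ :=
    ProbabilityTheory.MemLp.uniformIntegrable_of_identDistrib (j := 0) hp hp' hg
      fun k => (hT.iterate k).identDistrib_comp hg.1.aemeasurable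
  convert uniformIntegrable_average hp hUI using 1
  ext n x
  simp [birkhoffAverage, birkhoffSum, Finset.sum_apply]

theorem UniformIntegrable.of_ae_norm_le {ι E : Type*} [NormedAddCommGroup E] {p : ENNReal}
    {f g : ι → X → E} (hf : UniformIntegrable f p μ) (hg : ∀ i, AEStronglyMeasurable (g i) μ)
    (hgf : ∀ i, ∀ᵐ x ∂μ, ‖g i x‖ ≤ ‖f i x‖) : UniformIntegrable g p μ := by
  obtain ⟨-, hf_unif, C, hC⟩ := hf
  refine ⟨hg, fun ε hε => ?_, C, fun i => (eLpNorm_mono_ae (hgf i)).trans (hC i)⟩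
  obtain ⟨δ, hδ, hδf⟩ := hf_unif hε
  refine ⟨δ, hδ, fun i s hs hμs => (eLpNorm_mono_ae ?_).trans (hδf i s hs hμs)⟩
  filter_upwards [hgf i] with x hx
  simp only [norm_indicator_eq_indicator_norm]
  exact Set.indicator_le_indicator hx

theorem UniformIntegrable.tendsto_integral_of_ae_tendsto {E : Type*} [NormedAddCommGroup E]
    [NormedSpace ℝ E] [IsFiniteMeasure μ] {f : ℕ → X → E} {g : X → E}
    (hf : UniformIntegrable f 1 μ) (hfg : ∀ᵐ x ∂μ, Tendsto (f · x) atTop (𝓝 (g x))) :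
    Tendsto (fun n => ∫ x, f n x ∂μ) atTop (𝓝 (∫ x, g x ∂μ)) := by
  have hg : Integrable g μ := hf.integrable_of_ae_tendsto hfg
  refine tendsto_integral_of_L1' g hg.1
    (Eventually.of_forall fun n => memLp_one_iff_integrable.1 (hf.memLp n)) ?_
  exact tendsto_Lp_finite_of_tendsto_ae le_rfl ENNReal.one_ne_top hf.1
    (memLp_one_iff_integrable.2 hg) hf.2.1 hfg

end MeasureTheory

section BirkhoffDomination

variable {X : Type*} [MeasurableSpace X] {μ : Measure X}

theorem ae_le_birkhoffSum_of_le_add_comp {M : Type*} [AddCommMonoid M] [PartialOrder M]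
    [IsOrderedAddMonoid M] {T : X → X} (hT : Measure.QuasiMeasurePreserving T μ μ)
    {u : ℕ → X → M} {h : X → M} (hu_one : ∀ᵐ x ∂μ, u 1 x ≤ h x)
    (hu_succ : ∀ n, 1 ≤ n → ∀ᵐ x ∂μ, u (n + 1) x ≤ h x + u n (T x)) :
    ∀ n, 1 ≤ n → ∀ᵐ x ∂μ, u n x ≤ birkhoffSum T h n x := by
  intro n hn
  induction n, hn using Nat.le_induction with
  | base => simpa [birkhoffSum_one] using hu_one
  | succ n hn ih =>
    filter_upwards [hu_succ n hn, hT.ae ih] with x hx hTx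
    rw [birkhoffSum_succ']
    exact hx.trans (add_le_add_right hTx _)

theorem ae_max_zero_le_birkhoffSum {T : X → X} (hT : Measure.QuasiMeasurePreserving T μ μ)
    {f : ℕ → X → ℝ} {ρ : X → ℝ}
    (hρ : ∀ x, 0 ≤ ρ x) (hf : ∀ n, 1 ≤ n → ∀ᵐ x ∂μ, f (n + 1) x ≤ f 1 x + ρ x + f n (T x)) :
    ∀ n, 1 ≤ n → ∀ᵐ x ∂μ, max (f n x) 0 ≤ birkhoffSum T (fun x => max (f 1 x) 0 + ρ x) n x := by
  refine ae_le_birkhoffSum_of_le_add_comp hT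
    (Eventually.of_forall fun x => by simpa using hρ x) fun n hn => ?_
  filter_upwards [hf n hn] with x hx
  have hρx := hρ x
  exact max_le (by linarith [le_max_left (f 1 x) 0, le_max_left (f n (T x)) 0]) (by positivity)

theorem uniformIntegrable_div_of_ae_le_birkhoffSum [IsFiniteMeasure μ] {T : X → X}
    (hT : MeasurePreserving T μ μ) {p : ENNReal} (hp : 1 ≤ p) (hp' : p ≠ ⊤) {h : X → ℝ}
    (hh : MemLp h p μ) {u : ℕ → X → ℝ}
    (hu_meas : ∀ n, 1 ≤ n → AEStronglyMeasurable (u n) μ) (hu_nonneg : ∀ n x, 0 ≤ u n x)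
    (hu : ∀ n, 1 ≤ n → ∀ᵐ x ∂μ, u n x ≤ birkhoffSum T h n x) :
    UniformIntegrable (fun n x => u n x / n) p μ := by
  refine (hT.uniformIntegrable_birkhoffAverage hp hp' hh).of_ae_norm_le (fun n => ?_) fun n => ?_
  -- at `n = 0` both sides vanish: `x / 0 = 0` and `birkhoffAverage ℝ T h 0 = 0`
  all_goals rcases Nat.eq_zero_or_pos n with rfl | hn
  · simpa using aestronglyMeasurable_const
  · have := hu_meas n hn
    fun_prop
  · simp
  filter_upwards [hu n hn] with x hx
  rw [Real.norm_of_nonneg (div_nonneg (hu_nonneg n x) n.cast_nonneg)]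
  refine le_trans ?_ (Real.le_norm_self _)
  rw [birkhoffAverage, smul_eq_mul, inv_mul_eq_div]
  exact div_le_div_of_nonneg_right hx n.cast_nonneg

end BirkhoffDomination

theorem EReal.tendsto_toReal_max_zero {a : ℕ → ℝ} {L : EReal} (hL : L ≠ ⊤)
    (ha : Tendsto (fun n => (a n : EReal) / n) atTop (𝓝 L)) :
    Tendsto (fun n => max (a n) 0 / n) atTop (𝓝 (max L 0).toReal) := by
  have hcont : ContinuousAt (fun y : EReal => (max y 0).toReal) L :=
    (EReal.tendsto_toReal (max_ne_top hL EReal.zero_ne_top)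
      (ne_bot_of_le_ne_bot EReal.zero_ne_bot (le_max_right _ _))).comp
      (continuous_id.max continuous_const).continuousAt
  refine (hcont.tendsto.comp ha).congr fun n => ?_
  rw [Function.comp_apply, ← EReal.coe_coe_eq_natCast, ← EReal.coe_div, ← EReal.coe_zero,
    ← EReal.coe_strictMono.monotone.map_max, EReal.toReal_coe,
    ← max_div_div_right n.cast_nonneg]
  simp

theorem gapped_subadditive_L1_step2_general
    {X : Type*} [MeasurableSpace X] (μ : Measure X) [IsProbabilityMeasure μ]
    (T : X → X) (hT : MeasurePreserving T μ μ)
    (f : ℕ → X → ℝ)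
    (hf_int : ∀ n, 1 ≤ n → Integrable (fun x => max (f n x) 0) μ)
    (σ : ℕ → ℕ) (hσ1 : σ 1 = 0)
    (ρ : ℕ → X → ℝ) (hρ_nonneg : ∀ n, 1 ≤ n → ∀ x, 0 ≤ ρ n x)
    (hρ_int : ∀ n, 1 ≤ n → Integrable (ρ n) μ)
    (hsub : ∀ n m, 1 ≤ n → 1 ≤ m → ∀ᵐ x ∂μ,
      f (n + σ n + m) x ≤ f n x + ρ n x + f m (T^[n + σ n] x))
    (F : X → EReal) (hF_top : ∀ᵐ x ∂μ, F x < ⊤)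
    (hF_lim : ∀ᵐ x ∂μ, Filter.Tendsto (fun n : ℕ => ((f n x : EReal) / (n : EReal)))
      Filter.atTop (𝓝 (F x))) :
    Integrable (fun x => (max (F x) 0).toReal) μ ∧
      Filter.Tendsto (fun n : ℕ => (1 / (n : ℝ)) * ∫ x, max (f n x) 0 ∂μ)
        Filter.atTop (𝓝 (∫ x, (max (F x) 0).toReal ∂μ)) := by
  have hh : Integrable (fun x => max (f 1 x) 0 + ρ 1 x) μ :=
    (hf_int 1 le_rfl).add (hρ_int 1 le_rfl)
  have hf_step : ∀ n, 1 ≤ n → ∀ᵐ x ∂μ, f (n + 1) x ≤ f 1 x + ρ 1 x + f n (T x) := by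
    intro n hn
    simpa [hσ1, add_comm 1 n] using hsub 1 n le_rfl hn
  have hUI : UniformIntegrable (fun n x => max (f n x) 0 / n) 1 μ :=
    uniformIntegrable_div_of_ae_le_birkhoffSum hT le_rfl ENNReal.one_ne_top
      (memLp_one_iff_integrable.2 hh) (fun n hn => (hf_int n hn).1) (fun _ _ => le_max_right _ _)
      (ae_max_zero_le_birkhoffSum hT.quasiMeasurePreserving (hρ_nonneg 1 le_rfl) hf_step)
  have hlim : ∀ᵐ x ∂μ, Tendsto (fun n => max (f n x) 0 / n) atTop (𝓝 (max (F x) 0).toReal) := by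
    filter_upwards [hF_top, hF_lim] with x hx_top hx_lim
    exact EReal.tendsto_toReal_max_zero hx_top.ne hx_lim
  refine ⟨hUI.integrable_of_ae_tendsto hlim, ?_⟩
  simpa only [integral_div, one_div_mul_eq_div] using hUI.tendsto_integral_of_ae_tendsto hlim

/-- **Step 2 of the L¹ gapped almost subadditive ergodic theorem.**  Under the
hypotheses of the L¹ gapped almost subadditive ergodic theorem, with `f` the μ-a.s.
limit of `f_n/n` (valued in `[-∞, ∞)`), the positive part `f₊ = max{f, 0}` belongs to
`L¹(dμ)` and `lim_n (1/n) ∫ f_{n,+} dμ = ∫ f₊ dμ`. -/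
theorem gapped_subadditive_L1_step2
    {X : Type*} [MeasurableSpace X] (μ : Measure X) [IsProbabilityMeasure μ]
    (T : X → X) (hT : MeasurePreserving T μ μ)
    (f : ℕ → X → ℝ) (hf_meas : ∀ n, 1 ≤ n → Measurable (f n))
    (hf_int : ∀ n, 1 ≤ n → Integrable (fun x => max (f n x) 0) μ)
    (σ : ℕ → ℕ) (hσ1 : σ 1 = 0)
    (hσ : Filter.Tendsto (fun n => (σ n : ℝ) / n) Filter.atTop (𝓝 0))
    (ρ : ℕ → X → ℝ) (hρ_nonneg : ∀ n, 1 ≤ n → ∀ x, 0 ≤ ρ n x)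
    (hρ_int : ∀ n, 1 ≤ n → Integrable (ρ n) μ)
    (hsub : ∀ n m, 1 ≤ n → 1 ≤ m → ∀ᵐ x ∂μ,
      f (n + σ n + m) x ≤ f n x + ρ n x + f m (T^[n + σ n] x))
    (hρ0 : ∀ᵐ x ∂μ, Filter.Tendsto (fun n => ρ n x / n) Filter.atTop (𝓝 0))
    (hρint0 : Filter.Tendsto (fun n : ℕ => (1 / (n : ℝ)) * ∫ x, ρ n x ∂μ)
      Filter.atTop (𝓝 0))
    (F : X → EReal) (hF_meas : Measurable F) (hF_top : ∀ᵐ x ∂μ, F x < ⊤)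
    (hF_lim : ∀ᵐ x ∂μ, Filter.Tendsto (fun n : ℕ => ((f n x : EReal) / (n : EReal)))
      Filter.atTop (𝓝 (F x))) :
    Integrable (fun x => (max (F x) 0).toReal) μ ∧
      Filter.Tendsto (fun n : ℕ => (1 / (n : ℝ)) * ∫ x, max (f n x) 0 ∂μ)
        Filter.atTop (𝓝 (∫ x, (max (F x) 0).toReal ∂μ)) :=
  gapped_subadditive_L1_step2_general μ T hT f hf_int σ hσ1 ρ hρ_nonneg hρ_int hsub F hF_top hF_lim
end
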